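/- arXiv:math/0410102 — 12 statements merged into one kernel-verified Lean document; each statement's English description precedes it below -/
import Mathlib

section
/- Let A and B be real random variables on a probability space with B > 0 almost surely, satisfying E[exp(λA − λ²B²/2)] ≤ 1 for all λ ∈ ℝ. Then for every real y > 0, E[ (y/√(B² + y²)) · exp( A² / (2(B² + y²)) ) ] ≤ 1. -/
open MeasureTheory Real

lemma gauss_rewrite (c a : ℝ) (hc : 0 < c) :
    (fun x : ℝ => Real.exp (-c * x ^ 2 + a * x)) =
      fun x => Real.exp (a ^ 2 / (4 * c)) * Real.exp (-c * (x - a / (2 * c)) ^ 2) := by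
  funext x
  rw [← Real.exp_add]
  congr 1
  field_simp
  ring

lemma gauss_int (c a : ℝ) (hc : 0 < c) :
    Integrable fun x : ℝ => Real.exp (-c * x ^ 2 + a * x) := by
  rw [gauss_rewrite c a hc]
  exact ((integrable_exp_neg_mul_sq hc).comp_sub_right _).const_mul _

lemma gauss_val (c a : ℝ) (hc : 0 < c) :
    ∫ x : ℝ, Real.exp (-c * x ^ 2 + a * x) =
      Real.sqrt (Real.pi / c) * Real.exp (a ^ 2 / (4 * c)) := by
  rw [gauss_rewrite c a hc, integral_const_mul,
    integral_sub_right_eq_self (μ := volume) (fun x : ℝ => Real.exp (-c * x ^ 2)) (a / (2 * c)),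
    integral_gaussian]
  ring

lemma key_lintegral (a b y : ℝ) (hy : 0 < y) :
    ∫⁻ x : ℝ, ENNReal.ofReal
        ((y / Real.sqrt (2 * Real.pi) * Real.exp (-(y ^ 2 / 2) * x ^ 2)) *
          Real.exp (x * a - x ^ 2 * b ^ 2 / 2))
      = ENNReal.ofReal
        (y / Real.sqrt (b ^ 2 + y ^ 2) * Real.exp (a ^ 2 / (2 * (b ^ 2 + y ^ 2)))) := by
  have hs : 0 < b ^ 2 + y ^ 2 := by positivity
  have hc : 0 < (b ^ 2 + y ^ 2) / 2 := by positivity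
  have heq : ∀ x : ℝ,
      (y / Real.sqrt (2 * Real.pi) * Real.exp (-(y ^ 2 / 2) * x ^ 2)) *
          Real.exp (x * a - x ^ 2 * b ^ 2 / 2) =
        (y / Real.sqrt (2 * Real.pi)) *
          Real.exp (-((b ^ 2 + y ^ 2) / 2) * x ^ 2 + a * x) := by
    intro x
    rw [mul_assoc, ← Real.exp_add]
    congr 1
    ring
  simp_rw [heq]
  rw [← ofReal_integral_eq_lintegral_ofReal
      (((gauss_int _ a hc).const_mul _))
      (Filter.Eventually.of_forall fun x => by positivity)]
  congr 1
  rw [integral_const_mul, gauss_val _ _ hc]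
  have h1 : Real.pi / ((b ^ 2 + y ^ 2) / 2) = (2 * Real.pi) / (b ^ 2 + y ^ 2) := by
    field_simp
  have h2 : a ^ 2 / (4 * ((b ^ 2 + y ^ 2) / 2)) = a ^ 2 / (2 * (b ^ 2 + y ^ 2)) := by
    congr 1; ring
  have hsq : (0:ℝ) < Real.sqrt (2 * Real.pi) := Real.sqrt_pos.mpr (by positivity)
  have hss : (0:ℝ) < Real.sqrt (b ^ 2 + y ^ 2) := Real.sqrt_pos.mpr hs
  rw [h1, h2, Real.sqrt_div (by positivity : (0:ℝ) ≤ 2 * Real.pi)]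
  field_simp

set_option maxHeartbeats 1000000 in
/-- Theorem 2.1, inequality (2.1). -/
theorem stmt_0 {Ω : Type*} {mΩ : MeasurableSpace Ω} {μ : Measure Ω}
    [IsProbabilityMeasure μ]
    (A B : Ω → ℝ) (hA : Measurable A) (hB : Measurable B)
    (hBpos : ∀ᵐ ω ∂μ, 0 < B ω)
    (h14 : ∀ lam : ℝ,
      ∫⁻ ω, ENNReal.ofReal (Real.exp (lam * A ω - lam ^ 2 * (B ω) ^ 2 / 2)) ∂μ ≤ 1)
    (y : ℝ) (hy : 0 < y) :
    ∫⁻ ω, ENNReal.ofReal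
        ((y / Real.sqrt ((B ω) ^ 2 + y ^ 2)) *
          Real.exp ((A ω) ^ 2 / (2 * ((B ω) ^ 2 + y ^ 2)))) ∂μ ≤ 1 := by
  set f : Ω → ℝ → ENNReal := fun ω x => ENNReal.ofReal
      ((y / Real.sqrt (2 * Real.pi) * Real.exp (-(y ^ 2 / 2) * x ^ 2)) *
        Real.exp (x * A ω - x ^ 2 * (B ω) ^ 2 / 2)) with hf
  have hx2 : Measurable fun p : Ω × ℝ => p.2 ^ 2 := measurable_snd.pow_const 2
  have h1 : Measurable fun p : Ω × ℝ =>
      y / Real.sqrt (2 * Real.pi) * Real.exp (-(y ^ 2 / 2) * p.2 ^ 2) :=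
    ((hx2.const_mul (-(y ^ 2 / 2))).exp).const_mul _
  have h2 : Measurable fun p : Ω × ℝ =>
      Real.exp (p.2 * A p.1 - p.2 ^ 2 * (B p.1) ^ 2 / 2) :=
    ((measurable_snd.mul (hA.comp measurable_fst)).sub
      ((hx2.mul ((hB.comp measurable_fst).pow_const 2)).div_const 2)).exp
  have hmeas : AEMeasurable (Function.uncurry f) (μ.prod volume) :=
    ((h1.mul h2).ennreal_ofReal).aemeasurable
  calc ∫⁻ ω, ENNReal.ofReal
        ((y / Real.sqrt ((B ω) ^ 2 + y ^ 2)) *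
          Real.exp ((A ω) ^ 2 / (2 * ((B ω) ^ 2 + y ^ 2)))) ∂μ
      = ∫⁻ ω, ∫⁻ x, f ω x ∂volume ∂μ := by
        refine lintegral_congr fun ω => ?_
        exact (key_lintegral (A ω) (B ω) y hy).symm
    _ = ∫⁻ x, ∫⁻ ω, f ω x ∂μ ∂volume := lintegral_lintegral_swap hmeas
    _ ≤ ∫⁻ x, ENNReal.ofReal (y / Real.sqrt (2 * Real.pi) *
          Real.exp (-(y ^ 2 / 2) * x ^ 2)) ∂volume := by
        refine lintegral_mono fun x => ?_
        have hC : 0 ≤ y / Real.sqrt (2 * Real.pi) * Real.exp (-(y ^ 2 / 2) * x ^ 2) := by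
          positivity
        have : ∀ ω, f ω x = ENNReal.ofReal
            (y / Real.sqrt (2 * Real.pi) * Real.exp (-(y ^ 2 / 2) * x ^ 2)) *
            ENNReal.ofReal (Real.exp (x * A ω - x ^ 2 * (B ω) ^ 2 / 2)) := fun ω =>
          ENNReal.ofReal_mul hC
        simp_rw [this]
        rw [lintegral_const_mul' _ _ ENNReal.ofReal_ne_top]
        calc _ ≤ ENNReal.ofReal (y / Real.sqrt (2 * Real.pi) *
                Real.exp (-(y ^ 2 / 2) * x ^ 2)) * 1 := mul_le_mul_right (h14 x) _
          _ = _ := mul_one _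
    _ = 1 := by
        rw [← ofReal_integral_eq_lintegral_ofReal
            ((integrable_exp_neg_mul_sq (by positivity : (0:ℝ) < y ^ 2 / 2)).const_mul _)
            (Filter.Eventually.of_forall fun x => by positivity),
          integral_const_mul, integral_gaussian]
        have h1 : Real.pi / (y ^ 2 / 2) = (2 * Real.pi) / y ^ 2 := by field_simp
        rw [h1, Real.sqrt_div (by positivity : (0:ℝ) ≤ 2 * Real.pi), Real.sqrt_sq hy.le]
        have hsq : (0:ℝ) < Real.sqrt (2 * Real.pi) := Real.sqrt_pos.mpr (by positivity)
        have : y / Real.sqrt (2 * Real.pi) * (Real.sqrt (2 * Real.pi) / y) = 1 := by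
          field_simp
        rw [this, ENNReal.ofReal_one]
end

section
/- Let A and B be real random variables on a probability space with B > 0 almost surely, satisfying E[exp(λA − λ²B²/2)] ≤ 1 for all λ ∈ ℝ, and assume 0 < E[B] < ∞. Then E[ exp( A² / (4(B² + (E B)²)) ) ] ≤ √2, and for every real x > 0, E[ exp( xA / √(B² + (E B)²) ) ] ≤ √2 · exp(x²). -/
/-!
Method of mixtures. Integrating the hypothesis `E exp(λA - λ²B²/2) ≤ 1` against `λ ~ N(0, v)`
and exchanging the integrals gives `E[exp(vA²/(2(1 + vB²))) / √(1 + vB²)] ≤ 1`. Take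
`v = (EB)⁻²`; Cauchy–Schwarz against the weight `√(1 + vB²) ≤ 1 + B/EB`, whose mean is `2`,
gives the first bound, and the second follows from `xy ≤ y²/4 + x²`.
-/

open MeasureTheory ProbabilityTheory Real
open scoped ENNReal NNReal

lemma lintegral_lintegral_le_of_forall_lintegral_le {Ω α : Type*} {mΩ : MeasurableSpace Ω}
    {mα : MeasurableSpace α} {μ : Measure Ω} {ν : Measure α} [SFinite μ]
    [IsProbabilityMeasure ν] {f : Ω → α → ℝ≥0∞} (hf : Measurable (Function.uncurry f))
    {C : ℝ≥0∞} (h : ∀ a, ∫⁻ ω, f ω a ∂μ ≤ C) :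
    ∫⁻ ω, ∫⁻ a, f ω a ∂ν ∂μ ≤ C := by
  rw [lintegral_lintegral_swap hf.aemeasurable]
  calc ∫⁻ a, ∫⁻ ω, f ω a ∂μ ∂ν ≤ ∫⁻ _, C ∂ν := lintegral_mono h
    _ = C := by simp

lemma lintegral_rpow_half_mul_le {Ω : Type*} {mΩ : MeasurableSpace Ω} {μ : Measure Ω}
    {f g : Ω → ℝ≥0∞} (hf : AEMeasurable f μ) (hg : AEMeasurable g μ) :
    ∫⁻ ω, (f ω * g ω) ^ (1 / 2 : ℝ) ∂μ ≤
      (∫⁻ ω, f ω ∂μ) ^ (1 / 2 : ℝ) * (∫⁻ ω, g ω ∂μ) ^ (1 / 2 : ℝ) := by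
  have hsq : ∀ x : ℝ≥0∞, (x ^ (1 / 2 : ℝ)) ^ (2 : ℝ) = x := fun x => by
    rw [← ENNReal.rpow_mul]; norm_num
  have := ENNReal.lintegral_mul_le_Lp_mul_Lq μ Real.HolderConjugate.two_two
      (hf.pow_const (1 / 2 : ℝ)) (hg.pow_const (1 / 2 : ℝ))
  simp only [hsq, Pi.mul_apply] at this
  simpa only [ENNReal.mul_rpow_of_nonneg _ _ (by norm_num : (0 : ℝ) ≤ 1 / 2)] using this

lemma lintegral_exp_mul_le {Ω : Type*} {mΩ : MeasurableSpace Ω} {μ : Measure Ω}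
    (T : Ω → ℝ) (x : ℝ) :
    ∫⁻ ω, ENNReal.ofReal (exp (x * T ω)) ∂μ ≤
      (∫⁻ ω, ENNReal.ofReal (exp (T ω ^ 2 / 4)) ∂μ) * ENNReal.ofReal (exp (x ^ 2)) := by
  rw [← lintegral_mul_const' _ _ ENNReal.ofReal_ne_top]
  refine lintegral_mono fun ω => ?_
  rw [← ENNReal.ofReal_mul (exp_nonneg _), ← exp_add]
  gcongr
  nlinarith [sq_nonneg (T ω - 2 * x)]

lemma lintegral_sqrt_one_add_mul_sq_le {Ω : Type*} {mΩ : MeasurableSpace Ω} {μ : Measure Ω}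
    [IsProbabilityMeasure μ] {B : Ω → ℝ} (hB : 0 ≤ᵐ[μ] B) (hBint : Integrable B μ) {v : ℝ}
    (hv : 0 ≤ v) :
    ∫⁻ ω, ENNReal.ofReal √(1 + v * B ω ^ 2) ∂μ ≤ ENNReal.ofReal (1 + √v * ∫ ω, B ω ∂μ) := by
  have hlin : Integrable (fun ω => 1 + √v * B ω) μ := (integrable_const 1).add (hBint.const_mul _)
  calc ∫⁻ ω, ENNReal.ofReal √(1 + v * B ω ^ 2) ∂μ ≤ ∫⁻ ω, ENNReal.ofReal (1 + √v * B ω) ∂μ := by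
        refine lintegral_mono_ae (hB.mono fun ω (hω : 0 ≤ B ω) => ENNReal.ofReal_le_ofReal ?_)
        rw [sqrt_le_left (by positivity)]
        nlinarith [sq_sqrt hv, sqrt_nonneg v, mul_nonneg (sqrt_nonneg v) hω]
    _ = ENNReal.ofReal (1 + √v * ∫ ω, B ω ∂μ) := by
        rw [← ofReal_integral_eq_lintegral_ofReal hlin
          (hB.mono fun ω (hω : 0 ≤ B ω) => by positivity), integral_add (integrable_const 1)
          (hBint.const_mul _), integral_const_mul]
        simp

lemma integrable_rexp_quadratic {b : ℝ} (hb : b < 0) (c : ℝ) :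
    Integrable fun x : ℝ => exp (b * x ^ 2 + c * x) := by
  refine (integrable_cexp_quadratic' (b := (b : ℂ)) (by simpa using hb) c 0).norm.congr
    (.of_forall fun x => ?_)
  simp only [Complex.norm_exp]
  norm_cast
  simp

lemma integral_rexp_quadratic {b : ℝ} (hb : b < 0) (c : ℝ) :
    ∫ x : ℝ, exp (b * x ^ 2 + c * x) = √(π / -b) * exp (-c ^ 2 / (4 * b)) := by
  have h := integral_cexp_quadratic (b := (b : ℂ)) (by simpa using hb) c 0
  simp only [add_zero, zero_sub] at h
  have hpos : 0 ≤ π / -b := div_nonneg pi_pos.le (neg_nonneg.mpr hb.le)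
  apply Complex.ofReal_injective
  rw [← integral_complex_ofReal, sqrt_eq_rpow]
  push_cast [Complex.ofReal_cpow hpos]
  convert h using 3
  ring_nf

lemma gaussianPDFReal_zero_mul_exp {v : ℝ≥0} (hv : v ≠ 0) (a b t : ℝ) :
    gaussianPDFReal 0 v t * exp (t * a - t ^ 2 * b ^ 2 / 2) =
      (√(2 * π * v))⁻¹ * exp (-((1 + v * b ^ 2) / (2 * v)) * t ^ 2 + a * t) := by
  have : (v : ℝ) ≠ 0 := by exact_mod_cast hv
  rw [gaussianPDFReal, mul_assoc, ← exp_add]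
  congr 2
  field_simp
  ring

lemma integral_gaussianPDFReal_zero_mul_exp {v : ℝ≥0} (hv : v ≠ 0) (a b : ℝ) :
    ∫ t, gaussianPDFReal 0 v t * exp (t * a - t ^ 2 * b ^ 2 / 2) =
      exp (v * a ^ 2 / (2 * (1 + v * b ^ 2))) / √(1 + v * b ^ 2) := by
  have hs : 0 < 1 + v * b ^ 2 := by positivity
  simp_rw [gaussianPDFReal_zero_mul_exp hv]
  rw [integral_const_mul, integral_rexp_quadratic (neg_lt_zero.mpr (by positivity))]
  have : π / -(-((1 + v * b ^ 2) / (2 * v))) = 2 * π * v / (1 + v * b ^ 2) := by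
    field_simp
  rw [this, sqrt_div' _ hs.le]
  field_simp
  congr 1
  field_simp
  ring

lemma lintegral_exp_mul_sub_sq_gaussianReal (v : ℝ≥0) (a b : ℝ) :
    ∫⁻ t, ENNReal.ofReal (exp (t * a - t ^ 2 * b ^ 2 / 2)) ∂gaussianReal 0 v =
      ENNReal.ofReal (exp (v * a ^ 2 / (2 * (1 + v * b ^ 2))) / √(1 + v * b ^ 2)) := by
  rcases eq_or_ne v 0 with rfl | hv
  · simp
  rw [gaussianReal_of_var_ne_zero _ hv,
    lintegral_withDensity_eq_lintegral_mul _ (measurable_gaussianPDF 0 v) (by fun_prop)]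
  simp only [Pi.mul_apply, gaussianPDF, ← ENNReal.ofReal_mul (gaussianPDFReal_nonneg _ _ _)]
  rw [← integral_gaussianPDFReal_zero_mul_exp hv, ofReal_integral_eq_lintegral_ofReal]
  · simp_rw [gaussianPDFReal_zero_mul_exp hv]
    exact (integrable_rexp_quadratic (neg_lt_zero.mpr (by positivity)) a).const_mul _
  · exact .of_forall fun t => mul_nonneg (gaussianPDFReal_nonneg _ _ _) (exp_nonneg _)

lemma lintegral_exp_div_sqrt_le_one {Ω : Type*} {mΩ : MeasurableSpace Ω} {μ : Measure Ω}
    [SFinite μ] {A B : Ω → ℝ} (hA : Measurable A) (hB : Measurable B)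
    (h : ∀ t : ℝ, ∫⁻ ω, ENNReal.ofReal (exp (t * A ω - t ^ 2 * B ω ^ 2 / 2)) ∂μ ≤ 1)
    (v : ℝ≥0) :
    ∫⁻ ω, ENNReal.ofReal
      (exp (v * A ω ^ 2 / (2 * (1 + v * B ω ^ 2))) / √(1 + v * B ω ^ 2)) ∂μ ≤ 1 := by
  simp_rw [← lintegral_exp_mul_sub_sq_gaussianReal]
  exact lintegral_lintegral_le_of_forall_lintegral_le (by fun_prop) h

lemma lintegral_exp_sq_div_le_sqrt_two {Ω : Type*} {mΩ : MeasurableSpace Ω} {μ : Measure Ω}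
    [IsProbabilityMeasure μ] {A B : Ω → ℝ} (hA : Measurable A) (hB : Measurable B)
    (hBpos : ∀ᵐ ω ∂μ, 0 < B ω)
    (h : ∀ t : ℝ, ∫⁻ ω, ENNReal.ofReal (exp (t * A ω - t ^ 2 * B ω ^ 2 / 2)) ∂μ ≤ 1)
    (hBint : Integrable B μ) (hEB : 0 < ∫ ω, B ω ∂μ) :
    ∫⁻ ω, ENNReal.ofReal (exp (A ω ^ 2 / (4 * (B ω ^ 2 + (∫ ω', B ω' ∂μ) ^ 2)))) ∂μ ≤
      ENNReal.ofReal √2 := by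
  set c := ∫ ω, B ω ∂μ
  set v : ℝ≥0 := ⟨(c ^ 2)⁻¹, by positivity⟩
  have hv : (v : ℝ) = (c ^ 2)⁻¹ := rfl
  have hvc : √(v : ℝ) * c = 1 := by
    rw [hv, sqrt_inv, sqrt_sq hEB.le, inv_mul_cancel₀ hEB.ne']
  have hmean : ∫⁻ ω, ENNReal.ofReal √(1 + v * B ω ^ 2) ∂μ ≤ ENNReal.ofReal 2 := by
    have : _ ≤ ENNReal.ofReal (1 + √v * c) :=
      lintegral_sqrt_one_add_mul_sq_le (hBpos.mono fun _ h => h.le) hBint v.2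
    rwa [hvc, one_add_one_eq_two] at this
  have hsplit : ∀ ω, ENNReal.ofReal (exp (A ω ^ 2 / (4 * (B ω ^ 2 + c ^ 2)))) =
      (ENNReal.ofReal (exp (v * A ω ^ 2 / (2 * (1 + v * B ω ^ 2))) / √(1 + v * B ω ^ 2)) *
        ENNReal.ofReal √(1 + v * B ω ^ 2)) ^ (1 / 2 : ℝ) := fun ω => by
    have hs : 0 < √(1 + v * B ω ^ 2) := sqrt_pos.mpr (by positivity)
    rw [← ENNReal.ofReal_mul (by positivity), div_mul_cancel₀ _ hs.ne',
      ENNReal.ofReal_rpow_of_nonneg (exp_nonneg _) (by norm_num), ← exp_mul, hv]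
    congr 2
    field_simp
    ring
  calc _ = _ := lintegral_congr hsplit
    _ ≤ _ := lintegral_rpow_half_mul_le (by fun_prop) (by fun_prop)
    _ ≤ 1 ^ (1 / 2 : ℝ) * ENNReal.ofReal 2 ^ (1 / 2 : ℝ) := by
      gcongr
      exact lintegral_exp_div_sqrt_le_one hA hB h v
    _ = ENNReal.ofReal √2 := by
      rw [ENNReal.one_rpow, one_mul, ENNReal.ofReal_rpow_of_nonneg zero_le_two (by norm_num),
        sqrt_eq_rpow]

/-- Theorem 2.1, the bounds `E exp(A²/[4(B²+(EB)²)]) ≤ √2` and (2.2). -/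
theorem stmt_1 {Ω : Type*} {mΩ : MeasurableSpace Ω} {μ : Measure Ω}
    [IsProbabilityMeasure μ]
    (A B : Ω → ℝ) (hA : Measurable A) (hB : Measurable B)
    (hBpos : ∀ᵐ ω ∂μ, 0 < B ω)
    (h14 : ∀ lam : ℝ,
      ∫⁻ ω, ENNReal.ofReal (Real.exp (lam * A ω - lam ^ 2 * (B ω) ^ 2 / 2)) ∂μ ≤ 1)
    (hBint : Integrable B μ) (hEB : 0 < ∫ ω, B ω ∂μ) :
    (∫⁻ ω, ENNReal.ofReal
        (Real.exp ((A ω) ^ 2 / (4 * ((B ω) ^ 2 + (∫ ω', B ω' ∂μ) ^ 2)))) ∂μ ≤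
      ENNReal.ofReal (Real.sqrt 2)) ∧
    ∀ x : ℝ, 0 < x →
      ∫⁻ ω, ENNReal.ofReal
          (Real.exp (x * A ω / Real.sqrt ((B ω) ^ 2 + (∫ ω', B ω' ∂μ) ^ 2))) ∂μ ≤
        ENNReal.ofReal (Real.sqrt 2 * Real.exp (x ^ 2)) := by
  have hfirst := lintegral_exp_sq_div_le_sqrt_two hA hB hBpos h14 hBint hEB
  refine ⟨hfirst, fun x _ => ?_⟩
  set c := ∫ ω, B ω ∂μ
  have hnorm : ∀ ω, (A ω / √(B ω ^ 2 + c ^ 2)) ^ 2 / 4 = A ω ^ 2 / (4 * (B ω ^ 2 + c ^ 2)) :=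
    fun ω => by rw [div_pow, sq_sqrt (by positivity), div_div, mul_comm 4]
  calc _ = ∫⁻ ω, ENNReal.ofReal (exp (x * (A ω / √(B ω ^ 2 + c ^ 2)))) ∂μ := by
        simp_rw [mul_div_assoc]
    _ ≤ _ := lintegral_exp_mul_le _ x
    _ ≤ ENNReal.ofReal √2 * ENNReal.ofReal (exp (x ^ 2)) := by
        simp_rw [hnorm]
        gcongr
    _ = _ := (ENNReal.ofReal_mul (sqrt_nonneg 2)).symm
end

section
/- Let A and B be real random variables on a probability space with B > 0 almost surely, satisfying E[exp(λA − λ²B²/2)] ≤ 1 for all λ ∈ ℝ, and assume 0 < E[B] < ∞. Then for every real p > 0, E[ ( |A| / √(B² + (E B)²) )^p ] ≤ 2^{p − 1/2} · p · Γ(p/2), where Γ is the Gamma function. -/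
/-!
Averaging the hypothesis over `λ ∼ 𝒩(0, c⁻²)` with `c = E B` gives
`E[c / √(B² + c²) · exp (A² / 2(B² + c²))] ≤ 1`. By Cauchy–Schwarz against
`E[√(B² + c²) / c] ≤ E[(B + c) / c] = 2`, the self-normalized variable
`Y = |A| / √(B² + c²)` satisfies `E[exp (Y² / 4)] ≤ √2`, hence the sub-Gaussian tail
`P(Y > t) ≤ √2 exp (-t² / 4)`; integrating this tail against `p t^(p-1)` gives the
Gamma-function moment bound.
-/

open MeasureTheory Real Set
open scoped ENNReal

lemma exp_mul_sub_sq_mul_eq (a l : ℝ) {v : ℝ} (hv : v ≠ 0) :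
    exp (l * a - l ^ 2 * v / 2) = exp (a ^ 2 / (2 * v)) * exp (-(v / 2) * (l - a / v) ^ 2) := by
  rw [← exp_add]
  congr 1
  field_simp
  ring

lemma lintegral_gaussian_mul_exp_mul (a : ℝ) {c v : ℝ} (hc : 0 < c) (hv : 0 < v) :
    ∫⁻ l, ENNReal.ofReal (c / √(2 * π) * exp (l * a - l ^ 2 * v / 2)) =
      ENNReal.ofReal (c / √v * exp (a ^ 2 / (2 * v))) := by
  simp_rw [exp_mul_sub_sq_mul_eq a _ hv.ne']
  have hint : Integrable fun l ↦
      c / √(2 * π) * (exp (a ^ 2 / (2 * v)) * exp (-(v / 2) * (l - a / v) ^ 2)) :=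
    (((integrable_exp_neg_mul_sq (half_pos hv)).comp_sub_right (a / v)).const_mul _).const_mul _
  rw [← ofReal_integral_eq_lintegral_ofReal hint (ae_of_all _ fun l ↦ by positivity),
    integral_const_mul, integral_const_mul,
    integral_sub_right_eq_self (fun x ↦ exp (-(v / 2) * x ^ 2)), integral_gaussian]
  congr 1
  rw [div_div_eq_mul_div, sqrt_div' _ hv.le]
  field_simp

section

variable {Ω : Type*} {mΩ : MeasurableSpace Ω} {μ : Measure Ω} {A B : Ω → ℝ}

lemma lintegral_gaussian_mixture_le_one [SFinite μ] (hA : Measurable A) (hB : Measurable B)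
    (h : ∀ l : ℝ, ∫⁻ ω, ENNReal.ofReal (exp (l * A ω - l ^ 2 * B ω ^ 2 / 2)) ∂μ ≤ 1)
    {c : ℝ} (hc : 0 < c) :
    ∫⁻ ω, ENNReal.ofReal
      (c / √(B ω ^ 2 + c ^ 2) * exp (A ω ^ 2 / (2 * (B ω ^ 2 + c ^ 2)))) ∂μ ≤ 1 := by
  set w : ℝ → ℝ≥0∞ := fun l ↦ ENNReal.ofReal (c / √(2 * π) * exp (-(l ^ 2 * c ^ 2 / 2)))
  have hw : ∫⁻ l, w l = 1 := calc
    _ = ∫⁻ l, ENNReal.ofReal (c / √(2 * π) * exp (l * 0 - l ^ 2 * c ^ 2 / 2)) := by simp [w]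
    _ = 1 := by
      rw [lintegral_gaussian_mul_exp_mul 0 hc (pow_pos hc 2)]
      simp [sqrt_sq hc.le, hc.ne']
  have hmeas : Measurable (Function.uncurry fun l ω ↦
      w l * ENNReal.ofReal (exp (l * A ω - l ^ 2 * B ω ^ 2 / 2))) := by
    fun_prop
  calc ∫⁻ ω, ENNReal.ofReal
        (c / √(B ω ^ 2 + c ^ 2) * exp (A ω ^ 2 / (2 * (B ω ^ 2 + c ^ 2)))) ∂μ
      = ∫⁻ ω, (∫⁻ l, w l * ENNReal.ofReal (exp (l * A ω - l ^ 2 * B ω ^ 2 / 2))) ∂μ := by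
        refine lintegral_congr fun ω ↦ ?_
        rw [← lintegral_gaussian_mul_exp_mul _ hc (by positivity)]
        refine lintegral_congr fun l ↦ ?_
        rw [← ENNReal.ofReal_mul (by positivity), mul_assoc, ← exp_add]
        ring_nf
    _ = ∫⁻ l, w l * ∫⁻ ω, ENNReal.ofReal (exp (l * A ω - l ^ 2 * B ω ^ 2 / 2)) ∂μ := by
        rw [← lintegral_lintegral_swap hmeas.aemeasurable]
        exact lintegral_congr fun l ↦ lintegral_const_mul' _ _ ENNReal.ofReal_ne_top
    _ ≤ ∫⁻ l, w l := lintegral_mono fun l ↦ mul_le_of_le_one_right' (h l)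
    _ = 1 := hw

lemma lintegral_sqrt_sq_add_sq_integral_div_le_two [IsProbabilityMeasure μ]
    (hBpos : ∀ᵐ ω ∂μ, 0 < B ω) (hBint : Integrable B μ) (hc : 0 < ∫ ω, B ω ∂μ) :
    ∫⁻ ω, ENNReal.ofReal (√(B ω ^ 2 + (∫ ω', B ω' ∂μ) ^ 2) / ∫ ω', B ω' ∂μ) ∂μ ≤ 2 := by
  set c := ∫ ω, B ω ∂μ
  have hle : ∀ᵐ ω ∂μ, ENNReal.ofReal (√(B ω ^ 2 + c ^ 2) / c) ≤ ENNReal.ofReal ((B ω + c) / c) := by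
    filter_upwards [hBpos] with ω hω
    gcongr
    rw [sqrt_le_left (by positivity)]
    nlinarith
  have hint : Integrable (fun ω ↦ (B ω + c) / c) μ := (hBint.add (integrable_const c)).div_const c
  calc ∫⁻ ω, ENNReal.ofReal (√(B ω ^ 2 + c ^ 2) / c) ∂μ
      ≤ ∫⁻ ω, ENNReal.ofReal ((B ω + c) / c) ∂μ := lintegral_mono_ae hle
    _ = ENNReal.ofReal (∫ ω, (B ω + c) / c ∂μ) := by
        rw [ofReal_integral_eq_lintegral_ofReal hint]
        filter_upwards [hBpos] with ω hω
        positivity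
    _ = 2 := by
        rw [integral_div, integral_add hBint (integrable_const c), integral_const, probReal_univ,
          one_smul, ← two_mul, mul_div_cancel_right₀ _ hc.ne', ENNReal.ofReal_ofNat]

/-- Cauchy–Schwarz: `exp (A² / 4V)` is the geometric mean of the mixture integrand and `√V / c`. -/
lemma lintegral_exp_sq_div_four_le (hA : Measurable A) (hB : Measurable B) {c : ℝ} (hc : 0 < c)
    (hmix : ∫⁻ ω, ENNReal.ofReal
      (c / √(B ω ^ 2 + c ^ 2) * exp (A ω ^ 2 / (2 * (B ω ^ 2 + c ^ 2)))) ∂μ ≤ 1)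
    {K : ℝ≥0∞} (hK : ∫⁻ ω, ENNReal.ofReal (√(B ω ^ 2 + c ^ 2) / c) ∂μ ≤ K) :
    ∫⁻ ω, ENNReal.ofReal (exp (1 / 4 * (|A ω| / √(B ω ^ 2 + c ^ 2)) ^ 2)) ∂μ ≤ K ^ (1 / 2 : ℝ) := by
  have hmean : ∀ ω, ENNReal.ofReal (exp (1 / 4 * (|A ω| / √(B ω ^ 2 + c ^ 2)) ^ 2)) =
      ENNReal.ofReal (c / √(B ω ^ 2 + c ^ 2) * exp (A ω ^ 2 / (2 * (B ω ^ 2 + c ^ 2))))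
        ^ (1 / 2 : ℝ) * ENNReal.ofReal (√(B ω ^ 2 + c ^ 2) / c) ^ (1 / 2 : ℝ) := by
    intro ω
    have hV : 0 < B ω ^ 2 + c ^ 2 := by positivity
    rw [← ENNReal.mul_rpow_of_nonneg _ _ (by norm_num), ← ENNReal.ofReal_mul (by positivity),
      ENNReal.ofReal_rpow_of_nonneg (by positivity) (by norm_num)]
    congr 1
    rw [div_pow, sq_abs, sq_sqrt hV.le, mul_comm (c / _), mul_assoc, div_mul_div_cancel₀
      (sqrt_pos.2 hV).ne', div_self hc.ne', mul_one, ← exp_mul]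
    congr 1
    field_simp
    ring
  calc ∫⁻ ω, ENNReal.ofReal (exp (1 / 4 * (|A ω| / √(B ω ^ 2 + c ^ 2)) ^ 2)) ∂μ
      ≤ (∫⁻ ω, ENNReal.ofReal
          (c / √(B ω ^ 2 + c ^ 2) * exp (A ω ^ 2 / (2 * (B ω ^ 2 + c ^ 2)))) ∂μ) ^ (1 / 2 : ℝ) *
        (∫⁻ ω, ENNReal.ofReal (√(B ω ^ 2 + c ^ 2) / c) ∂μ) ^ (1 / 2 : ℝ) := by
        simp_rw [hmean]
        exact ENNReal.lintegral_mul_norm_pow_le (by fun_prop) (by fun_prop) (by norm_num)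
          (by norm_num) (by norm_num)
    _ ≤ 1 ^ (1 / 2 : ℝ) * K ^ (1 / 2 : ℝ) := by gcongr
    _ = K ^ (1 / 2 : ℝ) := by rw [ENNReal.one_rpow, one_mul]

lemma measure_lt_le_of_lintegral_exp_mul_sq_le {Y : Ω → ℝ} (hY : AEMeasurable Y μ) {b : ℝ}
    (hb : 0 ≤ b) {K : ℝ≥0∞} (h : ∫⁻ ω, ENNReal.ofReal (exp (b * Y ω ^ 2)) ∂μ ≤ K)
    {t : ℝ} (ht : 0 ≤ t) :
    μ {ω | t < Y ω} ≤ K * ENNReal.ofReal (exp (-(b * t ^ 2))) := by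
  set ε := ENNReal.ofReal (exp (b * t ^ 2))
  have hε : ε ≠ 0 := (ENNReal.ofReal_pos.2 (exp_pos _)).ne'
  have hsub : {ω | t < Y ω} ⊆ {ω | ε ≤ ENNReal.ofReal (exp (b * Y ω ^ 2))} := fun ω hω ↦ by
    have : t ^ 2 ≤ Y ω ^ 2 := pow_le_pow_left₀ ht (le_of_lt hω) 2
    exact ENNReal.ofReal_le_ofReal (exp_le_exp.2 (mul_le_mul_of_nonneg_left this hb))
  calc μ {ω | t < Y ω}
      ≤ (∫⁻ ω, ENNReal.ofReal (exp (b * Y ω ^ 2)) ∂μ) / ε :=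
        (measure_mono hsub).trans (meas_ge_le_lintegral_div (by fun_prop) hε ENNReal.ofReal_ne_top)
    _ ≤ K / ε := by gcongr
    _ = K * ENNReal.ofReal (exp (-(b * t ^ 2))) := by
        rw [div_eq_mul_inv, ← ENNReal.ofReal_inv_of_pos (exp_pos _), exp_neg]

lemma lintegral_rpow_le_of_measure_lt_le {Y : Ω → ℝ} (hY0 : 0 ≤ᵐ[μ] Y) (hY : AEMeasurable Y μ)
    {b : ℝ} (hb : 0 < b) {K : ℝ≥0∞}
    (htail : ∀ t, 0 < t → μ {ω | t < Y ω} ≤ K * ENNReal.ofReal (exp (-(b * t ^ 2))))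
    {p : ℝ} (hp : 0 < p) :
    ∫⁻ ω, ENNReal.ofReal (Y ω ^ p) ∂μ ≤
      K * ENNReal.ofReal (p * (b ^ (-p / 2) * (1 / 2) * Gamma (p / 2))) := by
  have hint : IntegrableOn (fun t : ℝ ↦ t ^ (p - 1) * exp (-b * t ^ (2 : ℝ))) (Ioi 0) :=
    integrableOn_rpow_mul_exp_neg_mul_rpow (by linarith) two_pos hb
  have hgamma := integral_rpow_mul_exp_neg_mul_rpow two_pos (by linarith : -1 < p - 1) hb
  rw [sub_add_cancel] at hgamma
  rw [lintegral_rpow_eq_lintegral_meas_lt_mul μ hY0 hY hp]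
  calc ENNReal.ofReal p * ∫⁻ t in Ioi 0, μ {ω | t < Y ω} * ENNReal.ofReal (t ^ (p - 1))
      ≤ ENNReal.ofReal p * ∫⁻ t in Ioi 0,
          K * ENNReal.ofReal (t ^ (p - 1) * exp (-b * t ^ (2 : ℝ))) := by
        refine mul_le_mul_right (setLIntegral_mono' measurableSet_Ioi fun t ht ↦ ?_) _
        calc μ {ω | t < Y ω} * ENNReal.ofReal (t ^ (p - 1))
            ≤ K * ENNReal.ofReal (exp (-(b * t ^ 2))) * ENNReal.ofReal (t ^ (p - 1)) :=
              mul_le_mul_left (htail t ht) _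
          _ = K * ENNReal.ofReal (t ^ (p - 1) * exp (-b * t ^ (2 : ℝ))) := by
              rw [mul_assoc, ← ENNReal.ofReal_mul (exp_pos _).le, mul_comm (exp _), rpow_two,
                neg_mul]
    _ = K * ENNReal.ofReal (p * (b ^ (-p / 2) * (1 / 2) * Gamma (p / 2))) := by
        rw [lintegral_const_mul _ (by fun_prop), ← ofReal_integral_eq_lintegral_ofReal hint
          ((ae_restrict_mem measurableSet_Ioi).mono fun t (ht : 0 < t) ↦ by positivity), hgamma,
          ENNReal.ofReal_mul hp.le]
        ring

end

/-- Theorem 2.1, the moment bound (2.3). -/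
theorem stmt_2 {Ω : Type*} {mΩ : MeasurableSpace Ω} {μ : Measure Ω}
    [IsProbabilityMeasure μ]
    (A B : Ω → ℝ) (hA : Measurable A) (hB : Measurable B)
    (hBpos : ∀ᵐ ω ∂μ, 0 < B ω)
    (h14 : ∀ lam : ℝ,
      ∫⁻ ω, ENNReal.ofReal (Real.exp (lam * A ω - lam ^ 2 * (B ω) ^ 2 / 2)) ∂μ ≤ 1)
    (hBint : Integrable B μ) (hEB : 0 < ∫ ω, B ω ∂μ)
    (p : ℝ) (hp : 0 < p) :
    ∫⁻ ω, ENNReal.ofReal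
        ((|A ω| / Real.sqrt ((B ω) ^ 2 + (∫ ω', B ω' ∂μ) ^ 2)) ^ p) ∂μ ≤
      ENNReal.ofReal ((2 : ℝ) ^ (p - 1 / 2) * p * Real.Gamma (p / 2)) := by
  have hexp := lintegral_exp_sq_div_four_le hA hB hEB
    (lintegral_gaussian_mixture_le_one hA hB h14 hEB)
    (lintegral_sqrt_sq_add_sq_integral_div_le_two hBpos hBint hEB)
  have hY : AEMeasurable (fun ω ↦ |A ω| / √(B ω ^ 2 + (∫ ω', B ω' ∂μ) ^ 2)) μ := by fun_prop
  have htail t (ht : 0 < t) := measure_lt_le_of_lintegral_exp_mul_sq_le hY (by norm_num) hexp ht.le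
  refine (lintegral_rpow_le_of_measure_lt_le (ae_of_all _ fun ω ↦ by positivity) hY
    (by norm_num) htail hp).trans_eq ?_
  have h4 : (1 / 4 : ℝ) ^ (-p / 2) = 2 ^ p := by
    rw [show (1 / 4 : ℝ) = 2 ^ (-2 : ℝ) by norm_num, ← rpow_mul zero_le_two]
    ring_nf
  have h2 : (2 : ℝ) ^ (p - 1 / 2) = 2 ^ (1 / 2 : ℝ) * 2 ^ p * (1 / 2) := by
    rw [rpow_sub two_pos]
    field_simp
    rw [← rpow_natCast, ← rpow_mul zero_le_two]
    norm_num
  rw [← ENNReal.ofReal_ofNat 2, ENNReal.ofReal_rpow_of_pos two_pos,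
    ← ENNReal.ofReal_mul (by positivity), h4, h2]
  ring_nf
end

section
/- Let A and B be real random variables on a probability space with B > 0 almost surely, satisfying E[exp(λA − λ²B²/2)] ≤ 1 for all λ ∈ ℝ. Then for all real x ≥ √2 and y > 0, P( |A| / √( (B² + y)(1 + (1/2)·log(B²/y + 1)) ) ≥ x ) ≤ exp(−x²/2). -/
open MeasureTheory Real
open scoped ENNReal

/-!
Method of mixtures. Integrating `exp (t * A - t ^ 2 * B ^ 2 / 2)` against the density of
`N(0, 1 / y)` in `t` and using Tonelli gives
`E[√(y / (B ^ 2 + y)) * exp (A ^ 2 / (2 * (B ^ 2 + y)))] ≤ 1`.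
On the event, `x ^ 2 ≥ 2` makes the exponent at least `x ^ 2 / 2 + log ((B ^ 2 + y) / y) / 2`,
whose second term cancels the prefactor; Markov's inequality concludes.
-/

lemma lintegral_exp_neg_mul_sq {c : ℝ} (hc : 0 < c) :
    ∫⁻ t : ℝ, ENNReal.ofReal (exp (-c * t ^ 2)) = ENNReal.ofReal (√(π / c)) := by
  rw [← ofReal_integral_eq_lintegral_ofReal (integrable_exp_neg_mul_sq hc)
    (Filter.Eventually.of_forall fun _ ↦ (exp_pos _).le), integral_gaussian]

lemma lintegral_exp_neg_mul_sq_add_mul {c : ℝ} (hc : 0 < c) (a : ℝ) :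
    ∫⁻ t : ℝ, ENNReal.ofReal (exp (-c * t ^ 2 + a * t)) =
      ENNReal.ofReal (√(π / c) * exp (a ^ 2 / (4 * c))) := by
  have hsq (t : ℝ) : -c * t ^ 2 + a * t = -c * (t - a / (2 * c)) ^ 2 + a ^ 2 / (4 * c) := by
    field_simp; ring
  simp_rw [hsq, exp_add, ENNReal.ofReal_mul (exp_pos _).le]
  rw [lintegral_mul_const' _ _ ENNReal.ofReal_ne_top,
    lintegral_sub_right_eq_self (fun t ↦ ENNReal.ofReal (exp (-c * t ^ 2))),
    lintegral_exp_neg_mul_sq hc, ENNReal.ofReal_mul (sqrt_nonneg _)]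

-- `√(y / (2 * π)) * exp (-(y / 2) * t ^ 2)` is the density of `N(0, 1 / y)`.
lemma lintegral_exp_mul_sub_sq_mul_gaussianDensity (a b : ℝ) {y : ℝ} (hy : 0 < y) :
    ∫⁻ t : ℝ, ENNReal.ofReal (exp (t * a - t ^ 2 * b ^ 2 / 2)) *
        ENNReal.ofReal (√(y / (2 * π)) * exp (-(y / 2) * t ^ 2)) =
      ENNReal.ofReal (√(y / (b ^ 2 + y)) * exp (a ^ 2 / (2 * (b ^ 2 + y)))) := by
  have hc : 0 < (b ^ 2 + y) / 2 := by positivity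
  have hprod (t : ℝ) : exp (t * a - t ^ 2 * b ^ 2 / 2) * (√(y / (2 * π)) * exp (-(y / 2) * t ^ 2))
      = √(y / (2 * π)) * exp (-((b ^ 2 + y) / 2) * t ^ 2 + a * t) := by
    rw [mul_left_comm, ← exp_add]; ring_nf
  simp_rw [← ENNReal.ofReal_mul (exp_pos _).le, hprod, ENNReal.ofReal_mul (sqrt_nonneg _)]
  rw [lintegral_const_mul' _ _ ENNReal.ofReal_ne_top, lintegral_exp_neg_mul_sq_add_mul hc,
    ← ENNReal.ofReal_mul (sqrt_nonneg _), ← mul_assoc, ← sqrt_mul (by positivity),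
    ← ENNReal.ofReal_mul (sqrt_nonneg _)]
  congr 3
  · field_simp
  · ring

lemma exp_sq_div_two_le_of_le_div_sqrt {a b x y : ℝ} (hy : 0 < y) (hx : √2 ≤ x)
    (h : x ≤ |a| / √((b ^ 2 + y) * (1 + (1 / 2) * log (b ^ 2 / y + 1)))) :
    exp (x ^ 2 / 2) ≤ √(y / (b ^ 2 + y)) * exp (a ^ 2 / (2 * (b ^ 2 + y))) := by
  set s := b ^ 2 + y with hs
  set L := log (b ^ 2 / y + 1) with hL
  have hs0 : 0 < s := by positivity
  have hL0 : 0 ≤ L := log_nonneg (by have := div_nonneg (sq_nonneg b) hy.le; linarith)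
  have hd : 0 < s * (1 + (1 / 2) * L) := by positivity
  have hx0 : 0 ≤ x := (sqrt_nonneg 2).trans hx
  have hx2 : 2 ≤ x ^ 2 := (sqrt_le_left hx0).1 hx
  have hevent : x ^ 2 * (s * (1 + (1 / 2) * L)) ≤ a ^ 2 := by
    have := pow_le_pow_left₀ (by positivity) ((le_div_iff₀ (sqrt_pos.2 hd)).1 h) 2
    rwa [mul_pow, sq_sqrt hd.le, sq_abs] at this
  have hexponent : x ^ 2 / 2 ≤ -(L / 2) + a ^ 2 / (2 * s) := by
    rw [← sub_le_iff_le_add', le_div_iff₀ (by positivity)]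
    nlinarith [mul_nonneg hL0 (sub_nonneg.2 hx2)]
  have hsqrt : √(y / s) = exp (-(L / 2)) := by
    rw [exp_neg, exp_half, hL, exp_log (by positivity), ← sqrt_inv]
    congr 1
    rw [hs]
    field_simp
  rw [hsqrt, ← exp_add]
  exact exp_le_exp.2 hexponent

lemma lintegral_sqrt_mul_exp_sq_div_le_one {Ω : Type*} {mΩ : MeasurableSpace Ω} {μ : Measure Ω}
    [SFinite μ] {A B : Ω → ℝ} (hA : Measurable A) (hB : Measurable B)
    (hcanon : ∀ t : ℝ, ∫⁻ ω, ENNReal.ofReal (exp (t * A ω - t ^ 2 * B ω ^ 2 / 2)) ∂μ ≤ 1)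
    {y : ℝ} (hy : 0 < y) :
    ∫⁻ ω, ENNReal.ofReal (√(y / (B ω ^ 2 + y)) * exp (A ω ^ 2 / (2 * (B ω ^ 2 + y)))) ∂μ ≤ 1 :=
  calc ∫⁻ ω, ENNReal.ofReal (√(y / (B ω ^ 2 + y)) * exp (A ω ^ 2 / (2 * (B ω ^ 2 + y)))) ∂μ
      = ∫⁻ ω, (∫⁻ t : ℝ, ENNReal.ofReal (exp (t * A ω - t ^ 2 * B ω ^ 2 / 2)) *
          ENNReal.ofReal (√(y / (2 * π)) * exp (-(y / 2) * t ^ 2))) ∂μ := by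
        simp_rw [lintegral_exp_mul_sub_sq_mul_gaussianDensity _ _ hy]
    _ = ∫⁻ t : ℝ, (∫⁻ ω, ENNReal.ofReal (exp (t * A ω - t ^ 2 * B ω ^ 2 / 2)) ∂μ) *
          ENNReal.ofReal (√(y / (2 * π)) * exp (-(y / 2) * t ^ 2)) := by
        rw [lintegral_lintegral_swap (by fun_prop)]
        simp_rw [lintegral_mul_const' _ _ ENNReal.ofReal_ne_top]
    _ ≤ ∫⁻ t : ℝ, ENNReal.ofReal (exp (t * 0 - t ^ 2 * 0 ^ 2 / 2)) *
          ENNReal.ofReal (√(y / (2 * π)) * exp (-(y / 2) * t ^ 2)) := by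
        gcongr with t
        simpa using hcanon t
    _ = 1 := by
        rw [lintegral_exp_mul_sub_sq_mul_gaussianDensity _ _ hy]
        simp [hy.ne']

theorem stmt_3_general {Ω : Type*} {mΩ : MeasurableSpace Ω} {μ : Measure Ω}
    [IsProbabilityMeasure μ]
    (A B : Ω → ℝ) (hA : Measurable A) (hB : Measurable B)
    (h14 : ∀ lam : ℝ,
      ∫⁻ ω, ENNReal.ofReal (Real.exp (lam * A ω - lam ^ 2 * (B ω) ^ 2 / 2)) ∂μ ≤ 1)
    (x y : ℝ) (hx : Real.sqrt 2 ≤ x) (hy : 0 < y) :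
    μ {ω | x ≤ |A ω| /
        Real.sqrt (((B ω) ^ 2 + y) * (1 + (1 / 2) * Real.log ((B ω) ^ 2 / y + 1)))} ≤
      ENNReal.ofReal (Real.exp (-x ^ 2 / 2)) := by
  set g : Ω → ℝ≥0∞ := fun ω ↦
    ENNReal.ofReal (√(y / (B ω ^ 2 + y)) * exp (A ω ^ 2 / (2 * (B ω ^ 2 + y))))
  have hevent : {ω | x ≤ |A ω| /
      Real.sqrt (((B ω) ^ 2 + y) * (1 + (1 / 2) * Real.log ((B ω) ^ 2 / y + 1)))} ⊆
      {ω | ENNReal.ofReal (exp (x ^ 2 / 2)) ≤ g ω} := fun ω hω ↦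
    ENNReal.ofReal_le_ofReal (exp_sq_div_two_le_of_le_div_sqrt hy hx hω)
  have hmarkov : ENNReal.ofReal (exp (x ^ 2 / 2)) * μ {ω | ENNReal.ofReal (exp (x ^ 2 / 2)) ≤ g ω}
      ≤ 1 :=
    (mul_meas_ge_le_lintegral₀ (by fun_prop) _).trans
      (lintegral_sqrt_mul_exp_sq_div_le_one hA hB h14 hy)
  rw [neg_div, exp_neg, ENNReal.ofReal_inv_of_pos (exp_pos _), ENNReal.le_inv_iff_mul_le,
    mul_comm]
  exact (mul_le_mul_right (measure_mono hevent) _).trans hmarkov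

/-- Corollary 2.2, the tail bound (2.4). -/
theorem stmt_3 {Ω : Type*} {mΩ : MeasurableSpace Ω} {μ : Measure Ω}
    [IsProbabilityMeasure μ]
    (A B : Ω → ℝ) (hA : Measurable A) (hB : Measurable B)
    (hBpos : ∀ᵐ ω ∂μ, 0 < B ω)
    (h14 : ∀ lam : ℝ,
      ∫⁻ ω, ENNReal.ofReal (Real.exp (lam * A ω - lam ^ 2 * (B ω) ^ 2 / 2)) ∂μ ≤ 1)
    (x y : ℝ) (hx : Real.sqrt 2 ≤ x) (hy : 0 < y) :
    μ {ω | x ≤ |A ω| /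
        Real.sqrt (((B ω) ^ 2 + y) * (1 + (1 / 2) * Real.log ((B ω) ^ 2 / y + 1)))} ≤
      ENNReal.ofReal (Real.exp (-x ^ 2 / 2)) :=
  stmt_3_general (mΩ := mΩ) A B hA hB h14 x y hx hy
end

section
/- Let A and B be real random variables on a probability space with B > 0 almost surely, satisfying E[exp(λA − λ²B²/2)] ≤ 1 for all λ > 0. Let L : (0,∞) → (0,∞) be a nondecreasing function satisfying L(cy) ≤ 3cL(y) for all c ≥ 1 and y > 0, L(y²) ≤ 3L(y) for all y ≥ 1, and ∫₁^∞ dx/(x·L(x)) = 1/2. Define g(x) = (exp(x²/2)/x)·1_{x ≥ 1}. Then E[ g(A/B) / ( L(A/B) ∨ L(B ∨ 1/B) ) ] ≤ 3 / ∫₀¹ exp(−x²/2) dx. -/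
/-!
Method of mixtures. Integrating `E exp(λA - λ²B²/2) ≤ 1` against the probability density
`w(λ) = 1 / (λ L(max(λ, 1/λ)))` on `(0, ∞)` (its mass is `2 ∫₁^∞ dx / (x L x) = 1`, by the
substitution `λ ↦ 1/λ` on `(0, 1)`) gives `E ∫ w(λ) exp(λA - λ²B²/2) dλ ≤ 1` by Tonelli.
Pointwise, for `x = A/B ≥ 1` one has `λA - λ²B²/2 = x²/2 - (x - λB)²/2`; keep only
`λ ∈ ((x-1)/B, x/B]`, where the growth conditions on `L` give
`w(λ) ≥ B / (3x L(max(x, B, 1/B)))`. The Gaussian factor then integrates to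
`∫₀¹ e^{-t²/2} dt / B`, and `max(L x, L(max(B, 1/B))) = L(max(x, B, 1/B))` by monotonicity.
-/

open MeasureTheory Set

noncomputable def mixtureDensity (L : ℝ → ℝ) (l : ℝ) : ℝ := (l * L (max l l⁻¹))⁻¹

noncomputable def mixtureIntegral (L : ℝ → ℝ) (a b : ℝ) : ENNReal :=
  ∫⁻ l in Ioi 0, ENNReal.ofReal (Real.exp (l * a - l ^ 2 * b ^ 2 / 2)) *
    ENNReal.ofReal (mixtureDensity L l)

lemma one_le_max_self_inv {l : ℝ} (hl : 0 < l) : 1 ≤ max l l⁻¹ := by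
  rcases le_total 1 l with h | h
  · exact h.trans (le_max_left _ _)
  · exact ((one_le_inv₀ hl).2 h).trans (le_max_right _ _)

lemma lintegral_Ioo_zero_one_comp_inv (F : ℝ → ℝ) :
    ∫⁻ l in Ioo 0 1, ENNReal.ofReal (l * F l⁻¹)⁻¹ =
      ∫⁻ x in Ioi 1, ENNReal.ofReal (x * F x)⁻¹ := by
  have himage : Inv.inv '' Ioi (1 : ℝ) = Ioo 0 1 := by
    rw [image_inv_eq_inv, inv_Ioi₀ one_pos, inv_one]
  rw [← himage, lintegral_image_eq_lintegral_abs_deriv_mul measurableSet_Ioi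
    (fun x hx => (hasDerivAt_inv (zero_lt_one.trans hx).ne').hasDerivWithinAt)
    inv_injective.injOn]
  refine setLIntegral_congr_fun measurableSet_Ioi fun x hx => ?_
  have hx0 : 0 < x := zero_lt_one.trans hx
  rw [← ENNReal.ofReal_mul (abs_nonneg _), abs_neg, abs_of_pos (by positivity), inv_inv]
  congr 1
  field_simp

lemma lintegral_mixtureDensity {L : ℝ → ℝ} (hLpos : ∀ x > 0, 0 < L x)
    (hL : ∫ x in Ioi 1, (x * L x)⁻¹ = 1 / 2) :
    ∫⁻ l in Ioi 0, ENNReal.ofReal (mixtureDensity L l) = 1 := by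
  have hint : IntegrableOn (fun x => (x * L x)⁻¹) (Ioi 1) := by
    by_contra h
    rw [integral_undef h] at hL
    norm_num at hL
  have htail : ∫⁻ x in Ioi 1, ENNReal.ofReal (x * L x)⁻¹ = ENNReal.ofReal (1 / 2) := by
    rw [← hL, ofReal_integral_eq_lintegral_ofReal hint]
    filter_upwards [ae_restrict_mem measurableSet_Ioi] with x hx
    have hx0 : (0 : ℝ) < x := zero_lt_one.trans hx
    exact inv_nonneg.2 (mul_pos hx0 (hLpos x hx0)).le
  have hsmall : ∫⁻ l in Ioo 0 1, ENNReal.ofReal (mixtureDensity L l)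
      = ∫⁻ l in Ioo 0 1, ENNReal.ofReal (l * L l⁻¹)⁻¹ :=
    setLIntegral_congr_fun measurableSet_Ioo fun l hl => by
      rw [mixtureDensity, max_eq_right (hl.2.le.trans ((one_le_inv₀ hl.1).2 hl.2.le))]
  have hlarge : ∫⁻ l in Ioi 1, ENNReal.ofReal (mixtureDensity L l)
      = ∫⁻ x in Ioi 1, ENNReal.ofReal (x * L x)⁻¹ :=
    setLIntegral_congr_fun measurableSet_Ioi fun l hl => by
      rw [mixtureDensity, max_eq_left ((inv_le_one_of_one_le₀ hl.le).trans hl.le)]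
  rw [← Ioc_union_Ioi_eq_Ioi zero_le_one, lintegral_union measurableSet_Ioi
    (Ioc_disjoint_Ioi le_rfl), ← setLIntegral_congr Ioo_ae_eq_Ioc, hsmall, hlarge,
    lintegral_Ioo_zero_one_comp_inv, htail, ← ENNReal.ofReal_add (by norm_num) (by norm_num)]
  norm_num

lemma aemeasurable_mixtureDensity {L : ℝ → ℝ}
    (hLmono : ∀ x y : ℝ, 0 < x → x ≤ y → L x ≤ L y) :
    AEMeasurable (fun l => ENNReal.ofReal (mixtureDensity L l)) (volume.restrict (Ioi 0)) := by
  -- `L` need not be measurable, but on `(0, ∞)` the density only sees `L` on `[1, ∞)`,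
  -- where it agrees with the monotone `t ↦ L (max t 1)`.
  have hmono : Monotone fun t => L (max t 1) := fun s t hst =>
    hLmono _ _ (one_pos.trans_le (le_max_right _ _)) (max_le_max hst le_rfl)
  have hmeas : Measurable fun l => ENNReal.ofReal (mixtureDensity (fun t => L (max t 1)) l) :=
    (measurable_id.mul <| hmono.measurable.comp <|
      measurable_id.max measurable_inv).inv.ennreal_ofReal
  refine hmeas.aemeasurable.congr ?_
  filter_upwards [ae_restrict_mem measurableSet_Ioi] with l hl
  simp only [mixtureDensity, max_eq_left (one_le_max_self_inv hl)]

lemma lintegral_lintegral_exp_mul_le {Ω : Type*} {mΩ : MeasurableSpace Ω} {μ : Measure Ω}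
    [SFinite μ]
    {A B : Ω → ℝ} (hA : Measurable A) (hB : Measurable B)
    (hAB : ∀ lam : ℝ, 0 < lam →
      ∫⁻ ω, ENNReal.ofReal (Real.exp (lam * A ω - lam ^ 2 * (B ω) ^ 2 / 2)) ∂μ ≤ 1)
    {w : ℝ → ENNReal} (hw : AEMeasurable w (volume.restrict (Ioi 0))) :
    ∫⁻ ω, (∫⁻ l in Ioi (0 : ℝ),
        ENNReal.ofReal (Real.exp (l * A ω - l ^ 2 * (B ω) ^ 2 / 2)) * w l) ∂μ ≤
      ∫⁻ l in Ioi 0, w l := by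
  have hexp : Measurable fun p : Ω × ℝ => ENNReal.ofReal
      (Real.exp (p.2 * A p.1 - p.2 ^ 2 * (B p.1) ^ 2 / 2)) := by fun_prop
  rw [lintegral_lintegral_swap (hexp.aemeasurable.mul hw.comp_snd)]
  refine setLIntegral_mono' measurableSet_Ioi fun l hl => ?_
  rw [lintegral_mul_const _ (by fun_prop)]
  exact mul_le_of_le_one_left' (hAB l hl)

lemma setIntegral_Ioc_comp_sub_mul (f : ℝ → ℝ) (x : ℝ) {b : ℝ} (hb : 0 < b) :
    ∫ l in Ioc ((x - 1) / b) (x / b), f (x - b * l) = (∫ t in Ioc 0 1, f t) / b := by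
  have hle : (x - 1) / b ≤ x / b := by gcongr; linarith
  rw [← intervalIntegral.integral_of_le hle, intervalIntegral.integral_comp_sub_mul f hb.ne',
    mul_div_cancel₀ _ hb.ne', show x - b * ((x - 1) / b) = 1 by field_simp; ring, sub_self,
    intervalIntegral.integral_of_le zero_le_one, smul_eq_mul, inv_mul_eq_div]

lemma div_le_mixtureDensity {L : ℝ → ℝ} (hLpos : ∀ x > 0, 0 < L x)
    (hLmono : ∀ x y : ℝ, 0 < x → x ≤ y → L x ≤ L y)
    (hL_mul : ∀ c ≥ (1 : ℝ), ∀ y > (0 : ℝ), L (c * y) ≤ 3 * c * L y)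
    (hL_sq : ∀ y ≥ (1 : ℝ), L (y ^ 2) ≤ 3 * L y)
    {x b l : ℝ} (hx : 1 ≤ x) (hb : 0 < b) (hl : 0 < l) (hlx : l ≤ x / b) :
    b / (3 * x * L (max x (max b b⁻¹))) ≤ mixtureDensity L l := by
  set M := max x (max b b⁻¹)
  have hxM : x ≤ M := le_max_left _ _
  have hbM : b ≤ M := (le_max_left _ _).trans (le_max_right _ _)
  have hbM' : b⁻¹ ≤ M := (le_max_right _ _).trans (le_max_right _ _)
  have hM : 1 ≤ M := hx.trans hxM
  have hLM : 0 < L M := hLpos M (one_pos.trans_le hM)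
  rw [mixtureDensity, ← inv_div]
  refine inv_anti₀ (mul_pos hl (hLpos _ (hl.trans_le (le_max_left _ _)))) ?_
  rcases le_total l⁻¹ l with hinv | hinv
  · rw [max_eq_left hinv]
    have hlM : l ≤ M ^ 2 := calc
      l ≤ x * b⁻¹ := hlx
      _ ≤ M ^ 2 := by rw [sq]; gcongr
    calc l * L l ≤ x / b * (3 * L M) := by
          gcongr
          · exact (hLpos l hl).le
          · exact (hLmono _ _ hl hlM).trans (hL_sq M hM)
      _ = 3 * x * L M / b := by ring
  rw [max_eq_right hinv]
  rcases le_total 1 (l * b) with hlb | hlb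
  · have hlb' : l⁻¹ ≤ b := by rw [inv_le_iff_one_le_mul₀' hl]; linarith
    calc l * L l⁻¹ ≤ x / b * L M := by
          gcongr
          · exact (hLpos _ (inv_pos.2 hl)).le
          · exact hLmono _ _ (inv_pos.2 hl) (hlb'.trans hbM)
      _ ≤ 3 * x * L M / b := by
          rw [div_mul_eq_mul_div]; gcongr; linarith [mul_pos (one_pos.trans_le hx) hLM]
  · have hc : 1 ≤ (l * b)⁻¹ := (one_le_inv₀ (mul_pos hl hb)).2 hlb
    have hLinv : L l⁻¹ ≤ 3 * (l * b)⁻¹ * L b := by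
      have h := hL_mul _ hc b hb
      rwa [show (l * b)⁻¹ * b = l⁻¹ by field_simp] at h
    calc l * L l⁻¹ ≤ l * (3 * (l * b)⁻¹ * L M) := by
          gcongr
          exact hLinv.trans (by gcongr; exact hLmono _ _ hb hbM)
      _ = 3 * 1 * L M / b := by field_simp
      _ ≤ 3 * x * L M / b := by gcongr

lemma ofReal_le_lintegral_mixture {L : ℝ → ℝ} (hLpos : ∀ x > 0, 0 < L x)
    (hLmono : ∀ x y : ℝ, 0 < x → x ≤ y → L x ≤ L y)
    (hL_mul : ∀ c ≥ (1 : ℝ), ∀ y > (0 : ℝ), L (c * y) ≤ 3 * c * L y)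
    (hL_sq : ∀ y ≥ (1 : ℝ), L (y ^ 2) ≤ 3 * L y)
    {a b : ℝ} (hb : 0 < b) (hab : 1 ≤ a / b) :
    ENNReal.ofReal (Real.exp ((a / b) ^ 2 / 2) * (∫ t in Ioc 0 1, Real.exp (-t ^ 2 / 2)) /
        (3 * (a / b) * L (max (a / b) (max b b⁻¹)))) ≤
      mixtureIntegral L a b := by
  set x := a / b
  set M := max x (max b b⁻¹)
  have hx0 : 0 < x := one_pos.trans_le hab
  have hLM : 0 < L M := hLpos M (hx0.trans_le (le_max_left _ _))
  have hsub : Ioc ((x - 1) / b) (x / b) ⊆ Ioi 0 := fun l hl =>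
    (div_nonneg (sub_nonneg.2 hab) hb.le).trans_lt hl.1
  calc ENNReal.ofReal (Real.exp (x ^ 2 / 2) * (∫ t in Ioc 0 1, Real.exp (-t ^ 2 / 2)) /
        (3 * x * L M))
      = ENNReal.ofReal (∫ l in Ioc ((x - 1) / b) (x / b),
          Real.exp (x ^ 2 / 2) * Real.exp (-(x - b * l) ^ 2 / 2) * (b / (3 * x * L M))) := by
        rw [integral_mul_const, integral_const_mul,
          setIntegral_Ioc_comp_sub_mul (fun t => Real.exp (-t ^ 2 / 2)) x hb]
        field_simp
    _ = ∫⁻ l in Ioc ((x - 1) / b) (x / b), ENNReal.ofReal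
          (Real.exp (x ^ 2 / 2) * Real.exp (-(x - b * l) ^ 2 / 2) * (b / (3 * x * L M))) :=
        ofReal_integral_eq_lintegral_ofReal (Continuous.integrableOn_Ioc (by fun_prop))
          (ae_of_all _ fun l => by positivity)
    _ ≤ ∫⁻ l in Ioc ((x - 1) / b) (x / b), ENNReal.ofReal
          (Real.exp (l * a - l ^ 2 * b ^ 2 / 2)) * ENNReal.ofReal (mixtureDensity L l) := by
        refine setLIntegral_mono' measurableSet_Ioc fun l hl => ?_
        have hsq : l * a - l ^ 2 * b ^ 2 / 2 = x ^ 2 / 2 + -(x - b * l) ^ 2 / 2 := by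
          simp only [x]; field_simp; ring
        rw [← ENNReal.ofReal_mul (Real.exp_pos _).le, hsq, Real.exp_add]
        gcongr
        exact div_le_mixtureDensity hLpos hLmono hL_mul hL_sq hab hb (hsub hl) hl.2
    _ ≤ _ := lintegral_mono_set hsub

lemma integral_exp_neg_sq_div_two_pos : 0 < ∫ t in Ioc (0 : ℝ) 1, Real.exp (-t ^ 2 / 2) := by
  rw [← intervalIntegral.integral_of_le zero_le_one]
  exact intervalIntegral.intervalIntegral_pos_of_pos_on
    (Continuous.intervalIntegrable (by fun_prop) _ _) (fun t _ => Real.exp_pos _) one_pos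

lemma ofReal_div_max_le_mixture {L : ℝ → ℝ} (hLpos : ∀ x > 0, 0 < L x)
    (hLmono : ∀ x y : ℝ, 0 < x → x ≤ y → L x ≤ L y)
    (hL_mul : ∀ c ≥ (1 : ℝ), ∀ y > (0 : ℝ), L (c * y) ≤ 3 * c * L y)
    (hL_sq : ∀ y ≥ (1 : ℝ), L (y ^ 2) ≤ 3 * L y)
    (a : ℝ) {b : ℝ} (hb : 0 < b) :
    ENNReal.ofReal ((if 1 ≤ a / b then Real.exp ((a / b) ^ 2 / 2) / (a / b) else 0) /
        max (L (a / b)) (L (max b b⁻¹))) ≤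
      ENNReal.ofReal (3 / ∫ t in Ioc (0 : ℝ) 1, Real.exp (-t ^ 2 / 2)) *
        mixtureIntegral L a b := by
  set x := a / b
  split_ifs with hx
  swap
  · simp
  set c₀ := ∫ t in Ioc (0 : ℝ) 1, Real.exp (-t ^ 2 / 2)
  have hc₀ : 0 < c₀ := integral_exp_neg_sq_div_two_pos
  have hx0 : 0 < x := one_pos.trans_le hx
  have hmax : max (L x) (L (max b b⁻¹)) = L (max x (max b b⁻¹)) := by
    have hm : 0 < max b b⁻¹ := hb.trans_le (le_max_left _ _)
    rcases le_total x (max b b⁻¹) with h | h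
    · rw [max_eq_right h, max_eq_right (hLmono _ _ hx0 h)]
    · rw [max_eq_left h, max_eq_left (hLmono _ _ hm h)]
  calc ENNReal.ofReal (Real.exp (x ^ 2 / 2) / x / max (L x) (L (max b b⁻¹)))
      = ENNReal.ofReal (3 / c₀) * ENNReal.ofReal
          (Real.exp (x ^ 2 / 2) * c₀ / (3 * x * L (max x (max b b⁻¹)))) := by
        rw [← ENNReal.ofReal_mul (by positivity), hmax]
        congr 1
        field_simp
    _ ≤ _ := by
        gcongr
        exact ofReal_le_lintegral_mixture hLpos hLmono hL_mul hL_sq hb hx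

/-- Lemma 3.2. -/
theorem stmt_5 {Ω : Type*} {mΩ : MeasurableSpace Ω} {μ : Measure Ω}
    [IsProbabilityMeasure μ]
    (A B : Ω → ℝ) (hA : Measurable A) (hB : Measurable B)
    (hBpos : ∀ᵐ ω ∂μ, 0 < B ω)
    (h14 : ∀ lam : ℝ, 0 < lam →
      ∫⁻ ω, ENNReal.ofReal (Real.exp (lam * A ω - lam ^ 2 * (B ω) ^ 2 / 2)) ∂μ ≤ 1)
    (L : ℝ → ℝ)
    (hLpos : ∀ x > (0 : ℝ), 0 < L x)
    (hLmono : ∀ x y : ℝ, 0 < x → x ≤ y → L x ≤ L y)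
    (h31 : ∀ c ≥ (1 : ℝ), ∀ y > (0 : ℝ), L (c * y) ≤ 3 * c * L y)
    (h32 : ∀ y ≥ (1 : ℝ), L (y ^ 2) ≤ 3 * L y)
    (h33 : ∫ x in Set.Ioi (1 : ℝ), (x * L x)⁻¹ = 1 / 2)
    (g : ℝ → ℝ) (hg : ∀ x, g x = if 1 ≤ x then Real.exp (x ^ 2 / 2) / x else 0) :
    ∫⁻ ω, ENNReal.ofReal
        (g (A ω / B ω) / max (L (A ω / B ω)) (L (max (B ω) (B ω)⁻¹))) ∂μ ≤
      ENNReal.ofReal (3 / ∫ x in Set.Ioc (0 : ℝ) 1, Real.exp (-x ^ 2 / 2)) := by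
  calc ∫⁻ ω, ENNReal.ofReal
        (g (A ω / B ω) / max (L (A ω / B ω)) (L (max (B ω) (B ω)⁻¹))) ∂μ
      ≤ ∫⁻ ω, ENNReal.ofReal (3 / ∫ x in Ioc (0 : ℝ) 1, Real.exp (-x ^ 2 / 2)) *
          mixtureIntegral L (A ω) (B ω) ∂μ := by
        refine lintegral_mono_ae ?_
        filter_upwards [hBpos] with ω hω
        rw [hg]
        exact ofReal_div_max_le_mixture hLpos hLmono h31 h32 (A ω) hω
    _ ≤ ENNReal.ofReal (3 / ∫ x in Ioc (0 : ℝ) 1, Real.exp (-x ^ 2 / 2)) *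
          ∫⁻ l in Ioi 0, ENNReal.ofReal (mixtureDensity L l) := by
        rw [lintegral_const_mul' _ _ ENNReal.ofReal_ne_top]
        gcongr
        exact lintegral_lintegral_exp_mul_le hA hB h14 (aemeasurable_mixtureDensity hLmono)
    _ = _ := by rw [lintegral_mixtureDensity hLpos h33, mul_one]
end

section
/- Let 0 < γ < 1 < r ≤ 2. Define c_r = inf{ c > 0 : exp(x − c x^r) ≤ 1 + x for all x ≥ 0 }, c_r^{(γ)} = inf{ c > 0 : exp(x − c|x|^r) ≤ 1 + x for all −γ ≤ x ≤ 0 }, and c_{γ,r} = max{c_r, c_r^{(γ)}}. Then: (a) exp( x − c_{γ,r}|x|^r ) ≤ 1 + x for all x ≥ −γ; (b) c_r ≤ (r−1)^{r−1}(2−r)^{2−r}/r; and (c) c_r^{(γ)} = −{γ + log(1−γ)}/γ^r = Σ_{j=2}^∞ γ^{j−r}/j. -/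
/-! The bound on `c_r` integrates `t / (1 + t) ≤ K t ^ (r - 1)`, `K = (r-1)^(r-1) (2-r)^(2-r)`,
which is the weighted AM-GM inequality `t ^ (2 - r) ≤ K (1 + t)`. On the negative side,
`-(t + log (1 - t)) / t ^ r = ∑ t ^ (j + 2 - r) / (j + 2)` has nonnegative exponents when
`r ≤ 2`, so it increases on `(0, 1)` and the constraint at `x = -γ` is the binding one.
Finally each constraint `exp (x - c |x| ^ r) ≤ 1 + x` is closed in `c`, so an infimum of
admissible constants is admissible. -/

open Real Set

lemma rpow_self_pos {p : ℝ} (hp : 0 ≤ p) : 0 < p ^ p := by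
  rcases hp.eq_or_lt with rfl | hp
  · simp
  · exact rpow_pos_of_pos hp p

lemma mul_div_le_of_nonneg (a : ℝ) {x : ℝ} (hx : 0 ≤ x) : a * (x / a) ≤ x := by
  rcases eq_or_ne a 0 with rfl | ha
  · simpa using hx
  · rw [mul_div_cancel₀ x ha]

lemma rpow_le_rpow_self_mul_rpow_self_mul_one_add {p q x : ℝ} (hp : 0 ≤ p) (hq : 0 ≤ q)
    (hpq : p + q = 1) (hx : 0 ≤ x) : x ^ q ≤ p ^ p * q ^ q * (1 + x) := by
  have hK : 0 < p ^ p * q ^ q := mul_pos (rpow_self_pos hp) (rpow_self_pos hq)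
  have amgm := geom_mean_le_arith_mean2_weighted hp hq (one_div_nonneg.2 hp)
    (div_nonneg hx hq) hpq
  rw [div_rpow zero_le_one hp, div_rpow hx hq, one_rpow, div_mul_div_comm, one_mul,
    div_le_iff₀ hK] at amgm
  calc x ^ q ≤ (p * (1 / p) + q * (x / q)) * (p ^ p * q ^ q) := amgm
    _ ≤ (1 + x) * (p ^ p * q ^ q) :=
      mul_le_mul_of_nonneg_right
        (add_le_add (mul_div_le_of_nonneg p zero_le_one) (mul_div_le_of_nonneg q hx)) hK.le
    _ = p ^ p * q ^ q * (1 + x) := mul_comm _ _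

lemma sub_log_one_add_le_mul_rpow {r : ℝ} (hr1 : 1 < r) (hr2 : r ≤ 2) {x : ℝ} (hx : 0 ≤ x) :
    x - log (1 + x) ≤ (r - 1) ^ (r - 1) * (2 - r) ^ (2 - r) / r * x ^ r := by
  set K := (r - 1) ^ (r - 1) * (2 - r) ^ (2 - r)
  have hr0 : 0 < r := by linarith
  let F : ℝ → ℝ := fun y ↦ K / r * y ^ r - y + log (1 + y)
  have hcont : ContinuousOn F (Ici 0) := by
    refine ContinuousOn.add (by fun_prop (disch := positivity)) (ContinuousOn.log (by fun_prop) ?_)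
    intro y (hy : 0 ≤ y)
    positivity
  have hderiv : ∀ y ∈ interior (Ici (0 : ℝ)),
      HasDerivWithinAt F (K * y ^ (r - 1) - y / (1 + y)) (interior (Ici 0)) y := by
    rw [interior_Ici]
    intro y (hy : 0 < y)
    have h : HasDerivAt F (K / r * (r * y ^ (r - 1)) - 1 + 1 / (1 + y)) y :=
      (((hasDerivAt_rpow_const (p := r) (Or.inl hy.ne')).const_mul (K / r)).sub
        (hasDerivAt_id' y)).add (((hasDerivAt_id' y).const_add 1).log (by positivity))
    refine h.hasDerivWithinAt.congr_deriv ?_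
    field_simp
    ring
  have hderiv_nonneg : ∀ y ∈ interior (Ici (0 : ℝ)), 0 ≤ K * y ^ (r - 1) - y / (1 + y) := by
    rw [interior_Ici]
    intro y (hy : 0 < y)
    have hyoung := rpow_le_rpow_self_mul_rpow_self_mul_one_add (p := r - 1) (q := 2 - r)
      (by linarith) (by linarith) (by ring) hy.le
    rw [sub_nonneg, div_le_iff₀ (by positivity)]
    calc y = y ^ (2 - r) * y ^ (r - 1) := by rw [← rpow_add hy]; norm_num
      _ ≤ K * (1 + y) * y ^ (r - 1) := by gcongr
      _ = K * y ^ (r - 1) * (1 + y) := by ring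
  have hmono := monotoneOn_of_hasDerivWithinAt_nonneg (convex_Ici 0) hcont hderiv hderiv_nonneg
    self_mem_Ici hx hx
  simp only [F, zero_rpow hr0.ne', add_zero, log_one, mul_zero, sub_zero] at hmono
  linarith

lemma hasSum_pow_add_two_div_log_of_abs_lt_one {t : ℝ} (ht : |t| < 1) :
    HasSum (fun j : ℕ ↦ t ^ (j + 2) / ((j : ℝ) + 2)) (-(t + log (1 - t))) := by
  have h := (hasSum_nat_add_iff' 1).mpr (hasSum_pow_div_log_of_abs_lt_one ht)
  simp only [Finset.range_one, Finset.sum_singleton, Nat.cast_zero, zero_add, pow_one,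
    div_one] at h
  rw [show -(t + log (1 - t)) = -log (1 - t) - t by ring]
  refine h.congr_fun fun j ↦ ?_
  push_cast
  ring_nf

lemma hasSum_rpow_div_log_of_pos_of_lt_one {t : ℝ} (r : ℝ) (ht0 : 0 < t) (ht1 : t < 1) :
    HasSum (fun j : ℕ ↦ t ^ ((j : ℝ) + 2 - r) / ((j : ℝ) + 2)) (-(t + log (1 - t)) / t ^ r) := by
  refine ((hasSum_pow_add_two_div_log_of_abs_lt_one
    (abs_lt.2 ⟨by linarith, ht1⟩)).div_const (t ^ r)).congr_fun fun j ↦ ?_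
  rw [show (j : ℝ) + 2 - r = ((j + 2 : ℕ) : ℝ) - r by push_cast; ring, rpow_sub ht0,
    rpow_natCast, div_right_comm]

lemma monotoneOn_neg_add_log_one_sub_div_rpow {r : ℝ} (hr : r ≤ 2) :
    MonotoneOn (fun t ↦ -(t + log (1 - t)) / t ^ r) (Ioo 0 1) := by
  intro s ⟨hs0, hs1⟩ t ⟨ht0, ht1⟩ hst
  refine hasSum_le (fun j ↦ ?_) (hasSum_rpow_div_log_of_pos_of_lt_one r hs0 hs1)
    (hasSum_rpow_div_log_of_pos_of_lt_one r ht0 ht1)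
  have : 0 ≤ (j : ℝ) + 2 - r := by linarith [j.cast_nonneg (α := ℝ)]
  gcongr

lemma Continuous.apply_csInf_le {α β : Type*} [ConditionallyCompleteLinearOrder α]
    [TopologicalSpace α] [OrderTopology α] [TopologicalSpace β] [Preorder β]
    [OrderClosedTopology β] {φ : α → β} (hφ : Continuous φ) {S : Set α} (hS : S.Nonempty)
    (hbdd : BddBelow S) {y : β} (h : ∀ c ∈ S, φ c ≤ y) : φ (sInf S) ≤ y :=
  closure_minimal h (isClosed_le hφ continuous_const) (csInf_mem_closure hS hbdd)

def admissibleOnNonneg (r : ℝ) : Set ℝ :=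
  {c : ℝ | 0 < c ∧ ∀ x ≥ (0 : ℝ), exp (x - c * x ^ r) ≤ 1 + x}

def admissibleOnIcc (γ r : ℝ) : Set ℝ :=
  {c : ℝ | 0 < c ∧ ∀ x : ℝ, -γ ≤ x → x ≤ 0 → exp (x - c * |x| ^ r) ≤ 1 + x}

lemma mem_admissibleOnNonneg {r : ℝ} (hr1 : 1 < r) (hr2 : r ≤ 2) :
    (r - 1) ^ (r - 1) * (2 - r) ^ (2 - r) / r ∈ admissibleOnNonneg r := by
  refine ⟨div_pos (mul_pos (rpow_self_pos (by linarith)) (rpow_self_pos (by linarith)))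
    (by linarith), fun x hx ↦ ?_⟩
  rw [← le_log_iff_exp_le (by linarith)]
  linarith [sub_log_one_add_le_mul_rpow hr1 hr2 hx]

lemma isLeast_admissibleOnIcc {γ r : ℝ} (hγ0 : 0 < γ) (hγ1 : γ < 1) (hr : r ≤ 2) :
    IsLeast (admissibleOnIcc γ r) (-(γ + log (1 - γ)) / γ ^ r) := by
  set A := -(γ + log (1 - γ)) / γ ^ r
  have hγr : 0 < γ ^ r := rpow_pos_of_pos hγ0 r
  have hA0 : 0 < A := by
    have := log_lt_sub_one_of_pos (x := 1 - γ) (by linarith) (by linarith)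
    exact div_pos (by linarith) hγr
  refine ⟨⟨hA0, fun x hγx hx0 ↦ ?_⟩, fun c ⟨_, hc⟩ ↦ ?_⟩
  · rcases hx0.eq_or_lt with rfl | hx0
    · rw [abs_zero, zero_sub, add_zero, exp_le_one_iff, neg_nonpos]
      exact mul_nonneg hA0.le (rpow_nonneg le_rfl r)
    · have hA := monotoneOn_neg_add_log_one_sub_div_rpow hr ⟨neg_pos.2 hx0, by linarith⟩
        ⟨hγ0, hγ1⟩ (neg_le.1 hγx)
      have hxr : 0 < (-x) ^ r := rpow_pos_of_pos (neg_pos.2 hx0) r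
      simp only [sub_neg_eq_add, div_le_iff₀ hxr] at hA
      rw [← le_log_iff_exp_le (by linarith), abs_of_neg hx0]
      linarith
  · have := hc (-γ) le_rfl (by linarith)
    rw [abs_neg, abs_of_pos hγ0, ← le_log_iff_exp_le (by linarith), ← sub_eq_add_neg] at this
    rw [div_le_iff₀ hγr]
    linarith

/-- Lemma 3.9(i). -/
theorem stmt_8 (γ r : ℝ) (hγ0 : 0 < γ) (hγ1 : γ < 1) (hr1 : 1 < r) (hr2 : r ≤ 2) :
    let cr : ℝ := sInf {c : ℝ | 0 < c ∧ ∀ x ≥ (0 : ℝ), Real.exp (x - c * x ^ r) ≤ 1 + x}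
    let crγ : ℝ := sInf {c : ℝ | 0 < c ∧
      ∀ x : ℝ, -γ ≤ x → x ≤ 0 → Real.exp (x - c * |x| ^ r) ≤ 1 + x}
    let cγr : ℝ := max cr crγ
    (∀ x : ℝ, -γ ≤ x → Real.exp (x - cγr * |x| ^ r) ≤ 1 + x) ∧
    cr ≤ (r - 1) ^ (r - 1) * (2 - r) ^ (2 - r) / r ∧
    crγ = -(γ + Real.log (1 - γ)) / γ ^ r ∧
    crγ = ∑' j : ℕ, γ ^ ((j : ℝ) + 2 - r) / ((j : ℝ) + 2) := by
  intro cr crγ cγr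
  have hB := mem_admissibleOnNonneg hr1 hr2
  have hbdd : BddBelow (admissibleOnNonneg r) := ⟨0, fun c hc ↦ hc.1.le⟩
  have hcr : ∀ x ≥ 0, exp (x - cr * x ^ r) ≤ 1 + x := fun x hx ↦
    (show Continuous fun c ↦ exp (x - c * x ^ r) by fun_prop).apply_csInf_le ⟨_, hB⟩ hbdd
      fun c hc ↦ hc.2 x hx
  have hleast := isLeast_admissibleOnIcc hγ0 hγ1 hr2
  have hcrγ : crγ = -(γ + log (1 - γ)) / γ ^ r := hleast.csInf_eq
  refine ⟨fun x hx ↦ ?_, csInf_le hbdd hB, hcrγ,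
    hcrγ.trans (hasSum_rpow_div_log_of_pos_of_lt_one r hγ0 hγ1).tsum_eq.symm⟩
  rcases le_total 0 x with hx0 | hx0
  · calc exp (x - cγr * |x| ^ r) ≤ exp (x - cr * x ^ r) := by
          rw [abs_of_nonneg hx0]; gcongr; exact le_max_left _ _
      _ ≤ 1 + x := hcr x hx0
  · calc exp (x - cγr * |x| ^ r) ≤ exp (x - crγ * |x| ^ r) := by gcongr; exact le_max_right _ _
      _ ≤ 1 + x := hcrγ ▸ hleast.1.2 x hx hx0
end

section
/- Let 0 < γ < 1 < r ≤ 2 and let c_{γ,r} = max{c_r, c_r^{(γ)}}, where c_r = inf{ c > 0 : exp(x − c x^r) ≤ 1 + x for all x ≥ 0 } and c_r^{(γ)} = inf{ c > 0 : exp(x − c|x|^r) ≤ 1 + x for all −γ ≤ x ≤ 0 }. Let (d_n) be a sequence of integrable random variables adapted to a filtration (F_n) such that E(d_n | F_{n−1}) ≤ 0 a.s. and d_n ≥ −M a.s. for all n, for some constant M > 0. Let A_n = Σ_{i=1}^n d_i, B_n = ( r·c_{γ,r}·Σ_{i=1}^n |d_i|^r )^{1/r}, with A₀ = B₀ = 0.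 Then for every 0 ≤ λ ≤ γ·M⁻¹, the process ( exp( λA_n − (λB_n)^r/r ) )_{n ≥ 0} is a supermartingale with respect to (F_n). -/
/-!
With `c = c_{γ,r}`, the exponent `λ A_n - (λ B_n)^r / r` is `∑ i ≤ n, (λ d_i - c |λ d_i|^r)`, so
the process is a product of the factors `exp (λ d_i - c |λ d_i|^r)`. Since `λ d_i ≥ -λ M ≥ -γ`,
the defining property of `c` bounds each factor by `1 + λ d_i`, whose conditional expectation
given `F_{i-1}` is at most `1`. The infimum inherits that property because the admissible
constants are those above `(x - log (1 + x)) / |x|^r`, and there are some (`1` on `[0, ∞)`,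
`(1 - γ)⁻¹` on `[-γ, 0]`, by `log (1 + x) ≥ x / (1 + x)`). The factors are bounded, as
`x - c |x|^r ≤ c^{-1/(r-1)}` once `c > 0`, so every term of the process is integrable and the
bounded past can be pulled out of the conditional expectation.
-/

open MeasureTheory Real Finset

theorem Real.exp_sub_le_one_add_of_sq_le {x a : ℝ} (hx : -1 < x) (h : x ^ 2 ≤ a * (1 + x)) :
    exp (x - a) ≤ 1 + x := by
  have h1x : 0 < 1 + x := by linarith
  rw [← le_log_iff_exp_le h1x]
  have hlog : 1 - (1 + x)⁻¹ ≤ log (1 + x) := one_sub_inv_le_log_of_pos h1x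
  have hxa : x - a ≤ 1 - (1 + x)⁻¹ := by
    rw [← div_le_iff₀ h1x] at h
    have : 1 - (1 + x)⁻¹ = x - x ^ 2 / (1 + x) := by field_simp; ring
    linarith
  linarith

theorem Real.sq_le_rpow_of_le_one {t r : ℝ} (ht0 : 0 ≤ t) (ht1 : t ≤ 1) (hr : r ≤ 2) :
    t ^ 2 ≤ t ^ r := by
  rcases ht0.eq_or_lt with rfl | ht0
  · rw [zero_pow two_ne_zero]; exact rpow_nonneg le_rfl r
  · exact_mod_cast rpow_le_rpow_of_exponent_ge ht0 ht1 hr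

theorem Real.sq_le_rpow_mul_one_add {x r : ℝ} (hx : 0 ≤ x) (hr1 : 1 ≤ r) (hr2 : r ≤ 2) :
    x ^ 2 ≤ x ^ r * (1 + x) := by
  have hxr : 0 ≤ x ^ r := rpow_nonneg hx r
  rcases le_total x 1 with hx1 | hx1
  · nlinarith [sq_le_rpow_of_le_one hx hx1 hr2]
  · have : x ^ 2 ≤ x ^ r * x := by
      rw [← rpow_add_one (by positivity : x ≠ 0)]
      exact_mod_cast rpow_le_rpow_of_exponent_le hx1 (by linarith : (2 : ℝ) ≤ r + 1)
    nlinarith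

theorem Real.exp_sub_rpow_le_one_add {x r : ℝ} (hx : 0 ≤ x) (hr1 : 1 ≤ r) (hr2 : r ≤ 2) :
    exp (x - x ^ r) ≤ 1 + x :=
  exp_sub_le_one_add_of_sq_le (by linarith) (sq_le_rpow_mul_one_add hx hr1 hr2)

theorem Real.exp_sub_inv_one_sub_mul_abs_rpow_le_one_add {x γ r : ℝ} (hγ1 : γ < 1) (hr2 : r ≤ 2)
    (hγx : -γ ≤ x) (hx0 : x ≤ 0) : exp (x - (1 - γ)⁻¹ * |x| ^ r) ≤ 1 + x := by
  have h1γ : 0 < 1 - γ := by linarith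
  refine exp_sub_le_one_add_of_sq_le (by linarith) ?_
  have hsq : x ^ 2 ≤ |x| ^ r := by
    rw [← sq_abs]
    exact sq_le_rpow_of_le_one (abs_nonneg x) (by rw [abs_of_nonpos hx0]; linarith) hr2
  have hfactor : 1 ≤ (1 - γ)⁻¹ * (1 + x) := by
    rw [inv_mul_eq_div, le_div_iff₀ h1γ]; linarith
  nlinarith [rpow_nonneg (abs_nonneg x) r]

theorem le_csInf_mul {S : Set ℝ} (hS : S.Nonempty) {a b : ℝ} (hb : 0 ≤ b)
    (h : ∀ c ∈ S, a ≤ c * b) : a ≤ sInf S * b := by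
  rcases hb.eq_or_lt with rfl | hb
  · obtain ⟨c, hc⟩ := hS
    simpa using h c hc
  · rw [← div_le_iff₀ hb]
    exact le_csInf hS fun c hc => (div_le_iff₀ hb).2 (h c hc)

theorem Real.sub_mul_abs_rpow_le {c r : ℝ} (hc : 0 < c) (hr : 1 < r) (x : ℝ) :
    x - c * |x| ^ r ≤ c⁻¹ ^ (1 / (r - 1)) := by
  set T := c⁻¹ ^ (1 / (r - 1))
  have hT : 0 < T := rpow_pos_of_pos (inv_pos.2 hc) _
  rcases le_or_gt x T with hxT | hxT
  · nlinarith [rpow_nonneg (abs_nonneg x) r]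
  have hx : 0 < x := hT.trans hxT
  have hTr : T ^ (r - 1) = c⁻¹ := by
    rw [← rpow_mul (inv_pos.2 hc).le, one_div, inv_mul_cancel₀ (by linarith), rpow_one]
  have hgrowth : 1 < c * x ^ (r - 1) := by
    calc 1 = c * c⁻¹ := (mul_inv_cancel₀ hc.ne').symm
      _ < c * x ^ (r - 1) := mul_lt_mul_of_pos_left (hTr ▸ rpow_lt_rpow hT.le hxT (by linarith)) hc
  have hpow : x ^ r = x ^ (r - 1) * x := by rw [← rpow_add_one hx.ne']; ring_nf
  rw [abs_of_pos hx, hpow]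
  nlinarith

-- The constants `c_r` and `c_r^{(γ)}` of the statement.
noncomputable def expConst (r : ℝ) : ℝ :=
  sInf {c : ℝ | 0 < c ∧ ∀ x ≥ (0 : ℝ), Real.exp (x - c * x ^ r) ≤ 1 + x}

noncomputable def expConstNeg (γ r : ℝ) : ℝ :=
  sInf {c : ℝ | 0 < c ∧ ∀ x : ℝ, -γ ≤ x → x ≤ 0 → Real.exp (x - c * |x| ^ r) ≤ 1 + x}

theorem sub_log_one_add_le_expConst_mul {r x : ℝ} (hr1 : 1 ≤ r) (hr2 : r ≤ 2) (hx : 0 ≤ x) :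
    x - log (1 + x) ≤ expConst r * x ^ r := by
  unfold expConst
  refine le_csInf_mul ?_ (rpow_nonneg hx r) fun c ⟨_, hc⟩ => ?_
  · exact ⟨1, one_pos, fun y hy => by simpa using exp_sub_rpow_le_one_add hy hr1 hr2⟩
  · have := (le_log_iff_exp_le (by linarith)).2 (hc x hx)
    linarith

theorem sub_log_one_add_le_expConstNeg_mul {γ r x : ℝ} (hγ1 : γ < 1) (hr2 : r ≤ 2)
    (hγx : -γ ≤ x) (hx0 : x ≤ 0) :
    x - log (1 + x) ≤ expConstNeg γ r * |x| ^ r := by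
  unfold expConstNeg
  refine le_csInf_mul ?_ (rpow_nonneg (abs_nonneg x) r) fun c ⟨_, hc⟩ => ?_
  · exact ⟨(1 - γ)⁻¹, inv_pos.2 (by linarith),
      fun y hγy hy0 => exp_sub_inv_one_sub_mul_abs_rpow_le_one_add hγ1 hr2 hγy hy0⟩
  · have := (le_log_iff_exp_le (by linarith)).2 (hc x hγx hx0)
    linarith

theorem expConst_pos {r : ℝ} (hr1 : 1 ≤ r) (hr2 : r ≤ 2) : 0 < expConst r := by
  have h := sub_log_one_add_le_expConst_mul hr1 hr2 zero_le_one
  have hlog2 : log 2 < 2 - 1 := log_lt_sub_one_of_pos two_pos (by norm_num)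
  norm_num at h
  linarith

theorem exp_sub_mul_abs_rpow_le_one_add {γ r c x : ℝ} (hγ1 : γ < 1) (hr1 : 1 ≤ r) (hr2 : r ≤ 2)
    (hc : max (expConst r) (expConstNeg γ r) ≤ c) (hγx : -γ ≤ x) :
    exp (x - c * |x| ^ r) ≤ 1 + x := by
  rw [← le_log_iff_exp_le (by linarith)]
  rcases le_total 0 x with hx | hx
  · rw [abs_of_nonneg hx]
    have := mul_le_mul_of_nonneg_right ((le_max_left _ _).trans hc) (rpow_nonneg hx r)
    linarith [sub_log_one_add_le_expConst_mul hr1 hr2 hx]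
  · have := mul_le_mul_of_nonneg_right ((le_max_right _ _).trans hc) (rpow_nonneg (abs_nonneg x) r)
    linarith [sub_log_one_add_le_expConstNeg_mul (r := r) hγ1 hr2 hγx hx]

theorem mul_sum_sub_rpow_div_eq_sum {ι : Type*} (s : Finset ι) (x : ι → ℝ) {lam c r : ℝ}
    (hlam : 0 ≤ lam) (hc : 0 ≤ c) (hr : 0 < r) :
    lam * ∑ i ∈ s, x i - (lam * (r * c * ∑ i ∈ s, |x i| ^ r) ^ (1 / r)) ^ r / r
      = ∑ i ∈ s, (lam * x i - c * |lam * x i| ^ r) := by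
  have hB : 0 ≤ r * c * ∑ i ∈ s, |x i| ^ r := by positivity
  rw [mul_rpow hlam (rpow_nonneg hB _), ← rpow_mul hB, one_div_mul_cancel hr.ne', rpow_one,
    sum_sub_distrib, mul_sum]
  simp_rw [abs_mul, abs_of_nonneg hlam, mul_rpow hlam (abs_nonneg _), ← mul_sum]
  field_simp

section Supermartingale

variable {Ω : Type*} {mΩ : MeasurableSpace Ω} {μ : Measure Ω} [IsFiniteMeasure μ]

theorem integrable_exp_of_le {g : Ω → ℝ} {T : ℝ} (hg : AEStronglyMeasurable g μ)
    (hT : ∀ ω, g ω ≤ T) : Integrable (fun ω => exp (g ω)) μ :=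
  .of_bound (continuous_exp.comp_aestronglyMeasurable hg) (exp T) <| ae_of_all μ fun ω => by
    rw [norm_of_nonneg (exp_pos _).le, exp_le_exp]
    exact hT ω

theorem condExp_le_one_of_le_one_add_mul {m : MeasurableSpace Ω} (hm : m ≤ mΩ) {Y d : Ω → ℝ}
    {a : ℝ} (ha : 0 ≤ a) (hY : Integrable Y μ) (hd : Integrable d μ)
    (hYd : Y ≤ᵐ[μ] fun ω => 1 + a * d ω) (hcond : μ[d | m] ≤ᵐ[μ] 0) : μ[Y | m] ≤ᵐ[μ] 1 := by
  have hmono := condExp_mono (m := m) hY ((integrable_const 1).add (hd.const_mul a)) hYd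
  have hadd := condExp_add (integrable_const (1 : ℝ)) (hd.const_mul a) m
  have hsmul : μ[fun ω => a * d ω | m] =ᵐ[μ] fun ω => a * (μ[d | m]) ω := condExp_smul a d m
  filter_upwards [hmono, hadd, hsmul, hcond] with ω hmono hadd hsmul hcond
  rw [hadd, Pi.add_apply, condExp_const hm, hsmul] at hmono
  have : a * (μ[d | m]) ω ≤ 0 := mul_nonpos_of_nonneg_of_nonpos ha hcond
  simp only [Pi.one_apply]
  linarith

theorem supermartingale_exp_sum {ℱ : Filtration ℕ mΩ} {g : ℕ → Ω → ℝ} {T : ℝ}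
    (hg : ∀ n, StronglyMeasurable[ℱ (n + 1)] (g n)) (hT : ∀ n ω, g n ω ≤ T)
    (hcond : ∀ n, μ[fun ω => exp (g n ω) | ℱ n] ≤ᵐ[μ] 1) :
    Supermartingale (fun n ω => exp (∑ i ∈ range n, g i ω)) ℱ μ := by
  have hsum : ∀ n, StronglyMeasurable[ℱ n] fun ω => ∑ i ∈ range n, g i ω := fun n =>
    Finset.stronglyMeasurable_fun_sum _ fun i hi => (hg i).mono (ℱ.mono (mem_range.1 hi))
  have hint : ∀ n, Integrable (fun ω => exp (∑ i ∈ range n, g i ω)) μ := fun n =>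
    integrable_exp_of_le ((hsum n).mono (ℱ.le n)).aestronglyMeasurable fun ω =>
      sum_le_card_nsmul _ _ _ fun i _ => hT i ω
  refine supermartingale_nat (fun n => continuous_exp.comp_stronglyMeasurable (hsum n)) hint
    fun n => ?_
  have hsucc : (fun ω => exp (∑ i ∈ range (n + 1), g i ω))
      = (fun ω => exp (∑ i ∈ range n, g i ω)) * fun ω => exp (g n ω) := by
    ext ω
    simp only [sum_range_succ, exp_add, Pi.mul_apply]
  have hpull := condExp_mul_of_stronglyMeasurable_left
    (continuous_exp.comp_stronglyMeasurable (hsum n)) (hsucc ▸ hint (n + 1))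
    (integrable_exp_of_le ((hg n).mono (ℱ.le _)).aestronglyMeasurable (hT n))
  rw [hsucc]
  filter_upwards [hpull, hcond n] with ω hpull hcond
  rw [hpull, Pi.mul_apply]
  exact mul_le_of_le_one_right (exp_pos _).le hcond

end Supermartingale

theorem stmt_9_general {Ω : Type*} {mΩ : MeasurableSpace Ω} {μ : Measure Ω}
    [IsProbabilityMeasure μ] (ℱ : Filtration ℕ mΩ)
    (γ r M : ℝ) (hγ1 : γ < 1) (hr1 : 1 < r) (hr2 : r ≤ 2) (hM : 0 < M)
    (d : ℕ → Ω → ℝ)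
    (hadp : ∀ n, StronglyMeasurable[ℱ (n + 1)] (d (n + 1)))
    (hint : ∀ n, Integrable (d (n + 1)) μ)
    (hcond : ∀ n, ∀ᵐ ω ∂μ, (μ[d (n + 1) | ℱ n]) ω ≤ 0)
    (hbdd : ∀ n, ∀ᵐ ω ∂μ, -M ≤ d (n + 1) ω)
    (lam : ℝ) (hlam0 : 0 ≤ lam) (hlam : lam ≤ γ * M⁻¹) :
    let cr : ℝ := sInf {c : ℝ | 0 < c ∧ ∀ x ≥ (0 : ℝ), Real.exp (x - c * x ^ r) ≤ 1 + x}
    let crγ : ℝ := sInf {c : ℝ | 0 < c ∧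
      ∀ x : ℝ, -γ ≤ x → x ≤ 0 → Real.exp (x - c * |x| ^ r) ≤ 1 + x}
    let cγr : ℝ := max cr crγ
    Supermartingale
      (fun n ω => Real.exp (lam * (∑ i ∈ Finset.range n, d (i + 1) ω) -
        (lam * (r * cγr * ∑ i ∈ Finset.range n, |d (i + 1) ω| ^ r) ^ (1 / r)) ^ r / r))
      ℱ μ := by
  intro cr crγ cγr
  have hc : 0 < cγr := (expConst_pos hr1.le hr2).trans_le (le_max_left _ _)
  have hlamM : lam * M ≤ γ := (le_mul_inv_iff₀ hM).1 hlam
  set g : ℕ → Ω → ℝ := fun i ω => lam * d (i + 1) ω - cγr * |lam * d (i + 1) ω| ^ r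
  have hg_meas : ∀ n, StronglyMeasurable[ℱ (n + 1)] (g n) := fun n => by
    have := continuous_rpow_const (q := r) (by linarith)
    exact (by fun_prop : Continuous fun y : ℝ => lam * y - cγr * |lam * y| ^ r)
      |>.comp_stronglyMeasurable (hadp n)
  have hg_le : ∀ n ω, g n ω ≤ cγr⁻¹ ^ (1 / (r - 1)) := fun n ω => sub_mul_abs_rpow_le hc hr1 _
  have hexp_le : ∀ n, ∀ᵐ ω ∂μ, exp (g n ω) ≤ 1 + lam * d (n + 1) ω := fun n => by
    filter_upwards [hbdd n] with ω hω
    exact exp_sub_mul_abs_rpow_le_one_add hγ1 hr1.le hr2 le_rfl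
      (by linarith [mul_le_mul_of_nonneg_left hω hlam0])
  have hcondExp : ∀ n, μ[fun ω => exp (g n ω) | ℱ n] ≤ᵐ[μ] 1 := fun n =>
    condExp_le_one_of_le_one_add_mul (ℱ.le n) hlam0
      (integrable_exp_of_le ((hg_meas n).mono (ℱ.le _)).aestronglyMeasurable (hg_le n))
      (hint n) (hexp_le n) (hcond n)
  convert supermartingale_exp_sum hg_meas hg_le hcondExp using 4 with n ω
  exact mul_sum_sub_rpow_div_eq_sum _ _ hlam0 hc.le (zero_lt_one.trans hr1)

/-- Lemma 3.9(ii). -/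
theorem stmt_9 {Ω : Type*} {mΩ : MeasurableSpace Ω} {μ : Measure Ω}
    [IsProbabilityMeasure μ] (ℱ : Filtration ℕ mΩ)
    (γ r M : ℝ) (hγ0 : 0 < γ) (hγ1 : γ < 1) (hr1 : 1 < r) (hr2 : r ≤ 2) (hM : 0 < M)
    (d : ℕ → Ω → ℝ)
    (hadp : ∀ n, StronglyMeasurable[ℱ (n + 1)] (d (n + 1)))
    (hint : ∀ n, Integrable (d (n + 1)) μ)
    (hcond : ∀ n, ∀ᵐ ω ∂μ, (μ[d (n + 1) | ℱ n]) ω ≤ 0)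
    (hbdd : ∀ n, ∀ᵐ ω ∂μ, -M ≤ d (n + 1) ω)
    (lam : ℝ) (hlam0 : 0 ≤ lam) (hlam : lam ≤ γ * M⁻¹) :
    let cr : ℝ := sInf {c : ℝ | 0 < c ∧ ∀ x ≥ (0 : ℝ), Real.exp (x - c * x ^ r) ≤ 1 + x}
    let crγ : ℝ := sInf {c : ℝ | 0 < c ∧
      ∀ x : ℝ, -γ ≤ x → x ≤ 0 → Real.exp (x - c * |x| ^ r) ≤ 1 + x}
    let cγr : ℝ := max cr crγ
    Supermartingale
      (fun n ω => Real.exp (lam * (∑ i ∈ Finset.range n, d (i + 1) ω) -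
        (lam * (r * cγr * ∑ i ∈ Finset.range n, |d (i + 1) ω| ^ r) ^ (1 / r)) ^ r / r))
      ℱ μ :=
  stmt_9_general ℱ γ r M hγ1 hr1 hr2 hM d hadp hint hcond hbdd lam hlam0 hlam
end

section
/- Let (d_i) be a sequence of random variables adapted to a filtration (F_i) that is conditionally symmetric, i.e., for each i the conditional distribution of d_i given F_{i−1} equals the conditional distribution of −d_i given F_{i−1}. Then for every λ ∈ ℝ, the process exp( λ·Σ_{i=1}^n d_i − (λ²/2)·Σ_{i=1}^n d_i² ), n ≥ 1, is a supermartingale with respect to (F_n), with mean ≤ 1. -/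
/-!
With `f x = exp (λ x - λ² x² / 2)` the process is the product `∏_{i ≤ n} f (d_i)`. Since
`f x + f (-x) = 2 cosh (λ x) exp (-λ² x² / 2) ≤ 2`, conditional symmetry gives
`E[f (d_{n+1}) | F_n] = (E[f (d_{n+1}) + f (-d_{n+1}) | F_n]) / 2 ≤ 1`, and pulling out the
`F_n`-measurable factor `∏_{i ≤ n} f (d_i)` yields the supermartingale inequality.
-/

open MeasureTheory Finset

section

variable {Ω : Type*} {m mΩ : MeasurableSpace Ω} {μ : Measure Ω} [IsFiniteMeasure μ]

theorem condExp_le_of_condExp_eq_of_add_le (hm : m ≤ mΩ) {f g : Ω → ℝ} {c : ℝ}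
    (hf : Integrable f μ) (hg : Integrable g μ) (hfg : μ[f | m] =ᵐ[μ] μ[g | m])
    (hle : ∀ᵐ ω ∂μ, f ω + g ω ≤ 2 * c) :
    μ[f | m] ≤ᵐ[μ] fun _ => c := by
  have hsum : μ[f + g | m] ≤ᵐ[μ] fun _ => 2 * c := by
    rw [← condExp_const (μ := μ) hm (2 * c)]
    exact condExp_mono (hf.add hg) (integrable_const _) hle
  filter_upwards [hfg, condExp_add hf hg m, hsum] with ω hfg hadd hsum
  simp only [hadd, Pi.add_apply, ← hfg] at hsum
  linarith

theorem supermartingale_prod_of_condExp_le_one {ℱ : Filtration ℕ mΩ} {Z : ℕ → Ω → ℝ}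
    (hZ_meas : ∀ n, StronglyMeasurable[ℱ (n + 1)] (Z n)) (hZ_nonneg : ∀ n ω, 0 ≤ Z n ω)
    (hZ_bdd : ∀ n, ∃ C, ∀ ω, Z n ω ≤ C) (hZ_condExp : ∀ n, μ[Z n | ℱ n] ≤ᵐ[μ] 1) :
    Supermartingale (fun n ω => ∏ i ∈ range n, Z i ω) ℱ μ := by
  set Y : ℕ → Ω → ℝ := fun n ω => ∏ i ∈ range n, Z i ω
  have hZ_norm (n : ℕ) : ∃ C, ∀ᵐ ω ∂μ, ‖Z n ω‖ ≤ C := by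
    obtain ⟨C, hC⟩ := hZ_bdd n
    exact ⟨C, .of_forall fun ω => (Real.norm_of_nonneg (hZ_nonneg n ω)).trans_le (hC ω)⟩
  have hZ_aesm (n : ℕ) : AEStronglyMeasurable (Z n) μ :=
    ((hZ_meas n).mono (ℱ.le _)).aestronglyMeasurable
  have hY_succ (n : ℕ) : Y (n + 1) = Y n * Z n := by
    funext ω; exact prod_range_succ _ _
  have hY_adapted : StronglyAdapted ℱ Y := fun n =>
    Finset.stronglyMeasurable_fun_prod _ fun i hi =>
      (hZ_meas i).mono (ℱ.mono (mem_range.1 hi))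
  have hY_int (n : ℕ) : Integrable (Y n) μ := by
    induction n with
    | zero => simp [Y]
    | succ n ih =>
      obtain ⟨C, hC⟩ := hZ_norm n
      exact hY_succ n ▸ ih.mul_bdd (hZ_aesm n) hC
  refine supermartingale_nat hY_adapted hY_int fun n => ?_
  rw [hY_succ]
  have hpull : μ[Y n * Z n | ℱ n] =ᵐ[μ] Y n * μ[Z n | ℱ n] :=
    condExp_mul_of_stronglyMeasurable_left (hY_adapted n) (hY_succ n ▸ hY_int (n + 1))
      (by obtain ⟨C, hC⟩ := hZ_norm n; exact .of_bound (hZ_aesm n) C hC)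
  filter_upwards [hpull, hZ_condExp n] with ω hpull hZ
  rw [hpull, Pi.mul_apply]
  exact mul_le_of_le_one_right (prod_nonneg fun i _ => hZ_nonneg i ω) hZ

end

namespace SelfNormalized

noncomputable def selfNormExp (lam x : ℝ) : ℝ := Real.exp (lam * x - lam ^ 2 * x ^ 2 / 2)

variable (lam : ℝ)

theorem selfNormExp_pos (x : ℝ) : 0 < selfNormExp lam x := Real.exp_pos _

theorem selfNormExp_le (x : ℝ) : selfNormExp lam x ≤ Real.exp (1 / 2) :=
  Real.exp_le_exp.2 (by nlinarith [sq_nonneg (lam * x - 1)])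

theorem measurable_selfNormExp : Measurable (selfNormExp lam) :=
  Real.measurable_exp.comp (by fun_prop)

theorem selfNormExp_add_selfNormExp_neg_le (x : ℝ) :
    selfNormExp lam x + selfNormExp lam (-x) ≤ 2 :=
  calc selfNormExp lam x + selfNormExp lam (-x)
      = 2 * Real.cosh (lam * x) * Real.exp (-((lam * x) ^ 2 / 2)) := by
        simp only [selfNormExp, Real.cosh_eq, sub_eq_add_neg, Real.exp_add]
        ring_nf
    _ ≤ 2 * Real.exp ((lam * x) ^ 2 / 2) * Real.exp (-((lam * x) ^ 2 / 2)) := by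
        gcongr; exact Real.cosh_le_exp_half_sq _
    _ = 2 := by rw [mul_assoc, ← Real.exp_add, add_neg_cancel, Real.exp_zero, mul_one]

theorem exp_sum_sub_sum_sq_eq_prod (x : ℕ → ℝ) (n : ℕ) :
    Real.exp (lam * (∑ i ∈ range n, x i) - lam ^ 2 * (∑ i ∈ range n, x i ^ 2) / 2) =
      ∏ i ∈ range n, selfNormExp lam (x i) := by
  simp only [selfNormExp, ← Real.exp_sum, mul_sum, sum_div, ← sum_sub_distrib]

theorem integrable_selfNormExp_comp {Ω : Type*} {mΩ : MeasurableSpace Ω} {μ : Measure Ω}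
    [IsFiniteMeasure μ] {X : Ω → ℝ} (hX : Measurable X) :
    Integrable (fun ω => selfNormExp lam (X ω)) μ :=
  .of_bound ((measurable_selfNormExp lam).comp hX).aestronglyMeasurable (Real.exp (1 / 2)) <|
    .of_forall fun _ => by
      rw [Real.norm_of_nonneg (selfNormExp_pos lam _).le]
      exact selfNormExp_le lam _

theorem condExp_selfNormExp_le_one {Ω : Type*} {m mΩ : MeasurableSpace Ω} {μ : Measure Ω}
    [IsFiniteMeasure μ] (hm : m ≤ mΩ) {X : Ω → ℝ} (hX : Measurable X)
    (hsym : μ[fun ω => selfNormExp lam (X ω) | m] =ᵐ[μ] μ[fun ω => selfNormExp lam (-X ω) | m]) :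
    μ[fun ω => selfNormExp lam (X ω) | m] ≤ᵐ[μ] 1 :=
  condExp_le_of_condExp_eq_of_add_le (c := 1) hm (integrable_selfNormExp_comp lam hX)
    (integrable_selfNormExp_comp lam hX.neg) hsym
    (.of_forall fun _ => (mul_one (2 : ℝ)).symm ▸ selfNormExp_add_selfNormExp_neg_le lam _)

end SelfNormalized

open SelfNormalized in
/-- Lemma 1.4 (conditionally symmetric sequences). -/
theorem stmt_10 {Ω : Type*} {mΩ : MeasurableSpace Ω} {μ : Measure Ω}
    [IsProbabilityMeasure μ] (ℱ : Filtration ℕ mΩ)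
    (d : ℕ → Ω → ℝ)
    (hadp : ∀ n, StronglyMeasurable[ℱ (n + 1)] (d (n + 1)))
    (hsym : ∀ n, ∀ f : ℝ → ℝ, Measurable f → (∃ C : ℝ, ∀ x, |f x| ≤ C) →
      μ[fun ω => f (d (n + 1) ω) | ℱ n] =ᵐ[μ] μ[fun ω => f (-d (n + 1) ω) | ℱ n])
    (lam : ℝ) :
    Supermartingale
      (fun n ω => Real.exp (lam * (∑ i ∈ Finset.range n, d (i + 1) ω) -
        lam ^ 2 * (∑ i ∈ Finset.range n, (d (i + 1) ω) ^ 2) / 2)) ℱ μ ∧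
    ∀ n, ∫ ω, Real.exp (lam * (∑ i ∈ Finset.range n, d (i + 1) ω) -
        lam ^ 2 * (∑ i ∈ Finset.range n, (d (i + 1) ω) ^ 2) / 2) ∂μ ≤ 1 := by
  have hprod (n : ℕ) (ω : Ω) := exp_sum_sub_sum_sq_eq_prod lam (fun i => d (i + 1) ω) n
  simp only [hprod]
  have hsm : Supermartingale (fun n ω => ∏ i ∈ range n, selfNormExp lam (d (i + 1) ω)) ℱ μ :=
    supermartingale_prod_of_condExp_le_one
      (fun n => ((measurable_selfNormExp lam).comp (hadp n).measurable).stronglyMeasurable)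
      (fun n ω => (selfNormExp_pos lam _).le) (fun n => ⟨_, fun ω => selfNormExp_le lam _⟩)
      fun n => condExp_selfNormExp_le_one lam (ℱ.le n) ((hadp n).mono (ℱ.le _)).measurable
        (hsym n _ (measurable_selfNormExp lam) ⟨Real.exp (1 / 2), fun x => by
          rw [abs_of_pos (selfNormExp_pos lam x)]; exact selfNormExp_le lam x⟩)
  refine ⟨hsm, fun n => ?_⟩
  simpa using hsm.setIntegral_le (Nat.zero_le n) MeasurableSet.univ
end

section
/- Let (d_n) be a sequence of integrable random variables adapted to a filtration (F_n) such that E(d_n | F_{n−1}) ≤ 0 a.s. and d_n ≤ M a.s. for all n, for some constant M > 0. Let 0 < λ₀ ≤ M⁻¹, A_n = Σ_{i=1}^n d_i, B_n² = (1 + (1/2)λ₀M)·Σ_{i=1}^n E(d_i² | F_{i−1}), with A₀ = B₀ = 0. Then for every 0 ≤ λ ≤ λ₀, the process ( exp( λA_n − (1/2)λ²B_n² ) )_{n ≥ 0} is a supermartingale with respect to (F_n). -/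
/-!
With `c = 1 + ½ λ₀ M`, the process is `Y_{n+1} = Y_n · Z_n` with
`Z_n = exp(λ d_{n+1} - ½ λ² c E(d_{n+1}² | F_n))`, and `Y_n ≥ 0` is `F_n`-measurable, so it is
enough that `E(Z_n | F_n) ≤ 1`. As `λ d_{n+1} ≤ λM ≤ 1`, the Taylor bound
`e^y ≤ 1 + y + ½ (1 + ½ λM) y²` for `y ≤ λM` gives
`E(e^{λ d_{n+1}} | F_n) ≤ 1 + λ E(d_{n+1} | F_n) + ½ λ² c E(d_{n+1}² | F_n)`, and the right-hand side
is at most `exp(½ λ² c E(d_{n+1}² | F_n))` because `E(d_{n+1} | F_n) ≤ 0` and `1 + x ≤ eˣ`.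
-/

open MeasureTheory

namespace Real

lemma exp_le_one_add_add_sq_div_two_of_nonpos {y : ℝ} (hy : y ≤ 0) :
    exp y ≤ 1 + y + y ^ 2 / 2 := by
  have hcubic : 1 + -y + (-y) ^ 2 / 2 + (-y) ^ 3 / 6 ≤ exp (-y) := by
    simpa [Finset.sum_range_succ, Nat.factorial] using sum_le_exp_of_nonneg (neg_nonneg.2 hy) 4
  have hpos : 0 < 1 + y + y ^ 2 / 2 := by nlinarith [sq_nonneg (y + 1)]
  -- `(1 + y + y²/2)(1 - y + y²/2 - y³/6) = 1 - y³/6 + y⁴/12 - y⁵/12 ≥ 1` for `y ≤ 0`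
  have hprod : 1 ≤ (1 + y + y ^ 2 / 2) * exp (-y) := by
    nlinarith [mul_le_mul_of_nonneg_left hcubic hpos.le, pow_two_nonneg y,
      mul_nonneg (neg_nonneg.2 hy) (pow_two_nonneg y)]
  calc exp y ≤ exp y * ((1 + y + y ^ 2 / 2) * exp (-y)) :=
        le_mul_of_one_le_right (exp_pos y).le hprod
    _ = 1 + y + y ^ 2 / 2 := by
        rw [mul_left_comm, ← exp_add, add_neg_cancel, exp_zero, mul_one]

lemma exp_le_one_add_add_mul_sq {u y : ℝ} (hu0 : 0 ≤ u) (hu1 : u ≤ 1) (hy : y ≤ u) :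
    exp y ≤ 1 + y + (1 + u / 2) / 2 * y ^ 2 := by
  rcases le_or_gt y 0 with hy0 | hy0
  · nlinarith [exp_le_one_add_add_sq_div_two_of_nonpos hy0, sq_nonneg y]
  · have hcubic := exp_bound' hy0.le (hy.trans hu1) (n := 3) (by norm_num)
    norm_num [Finset.sum_range_succ, Nat.factorial] at hcubic
    nlinarith [mul_le_mul_of_nonneg_left hy (sq_nonneg y)]

end Real

section

variable {Ω : Type*} {m mΩ : MeasurableSpace Ω} {μ : Measure Ω}

theorem supermartingale_of_succ_eq_mul [IsFiniteMeasure μ] {ℱ : Filtration ℕ mΩ}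
    {Y Z : ℕ → Ω → ℝ} {C : ℝ} (hY : StronglyAdapted ℱ Y) (hY0 : Integrable (Y 0) μ)
    (hY_nonneg : ∀ n, 0 ≤ᵐ[μ] Y n) (hYZ : ∀ n, Y (n + 1) = Y n * Z n)
    (hZ : ∀ n, AEStronglyMeasurable (Z n) μ) (hZ_bdd : ∀ n, ∀ᵐ ω ∂μ, ‖Z n ω‖ ≤ C)
    (hZ_cond : ∀ n, μ[Z n | ℱ n] ≤ᵐ[μ] 1) :
    Supermartingale Y ℱ μ := by
  have hint : ∀ n, Integrable (Y n) μ := by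
    intro n
    induction n with
    | zero => exact hY0
    | succ n ih => rw [hYZ]; exact ih.mul_bdd (hZ n) (hZ_bdd n)
  refine supermartingale_nat hY hint fun n => ?_
  have hpull := condExp_mul_of_stronglyMeasurable_left (hY n) (hYZ n ▸ hint (n + 1))
    (.of_bound (hZ n) C (hZ_bdd n))
  filter_upwards [hpull, hZ_cond n, hY_nonneg n] with ω hpullω hZω hYω
  rw [hYZ, hpullω, Pi.mul_apply]
  exact mul_le_of_le_one_right hYω hZω

lemma integrable_exp_mul_of_ae_le [IsFiniteMeasure μ] {d : Ω → ℝ} {M lam : ℝ}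
    (hd : AEStronglyMeasurable d μ) (hdM : ∀ᵐ ω ∂μ, d ω ≤ M) (hlam : 0 ≤ lam) :
    Integrable (fun ω => Real.exp (lam * d ω)) μ := by
  refine .of_bound (by fun_prop) (Real.exp (lam * M)) ?_
  filter_upwards [hdM] with ω hdω
  rw [Real.norm_of_nonneg (Real.exp_nonneg _), Real.exp_le_exp]
  exact mul_le_mul_of_nonneg_left hdω hlam

lemma condExp_exp_mul_le [IsFiniteMeasure μ] (hm : m ≤ mΩ) {d : Ω → ℝ} {M c lam : ℝ}
    (hd : Integrable d μ) (hd2 : Integrable (fun ω => d ω ^ 2) μ) (hcond : μ[d | m] ≤ᵐ[μ] 0)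
    (hdM : ∀ᵐ ω ∂μ, d ω ≤ M) (hlam : 0 ≤ lam) (hlamM0 : 0 ≤ lam * M) (hlamM1 : lam * M ≤ 1)
    (hc : 1 + lam * M / 2 ≤ c) :
    μ[fun ω => Real.exp (lam * d ω) | m] ≤ᵐ[μ]
      fun ω => Real.exp (1 / 2 * lam ^ 2 * c * μ[fun ω' => d ω' ^ 2 | m] ω) := by
  set q := 1 / 2 * lam ^ 2 * c
  have hquad : Integrable (fun ω => 1 + lam * d ω + q * d ω ^ 2) μ :=
    ((integrable_const 1).add (hd.const_mul lam)).add (hd2.const_mul q)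
  have hexp_le : (fun ω => Real.exp (lam * d ω)) ≤ᵐ[μ] fun ω => 1 + lam * d ω + q * d ω ^ 2 := by
    filter_upwards [hdM] with ω hdω
    have hexp := Real.exp_le_one_add_add_mul_sq hlamM0 hlamM1 (mul_le_mul_of_nonneg_left hdω hlam)
    have hq : (1 + lam * M / 2) / 2 * (lam * d ω) ^ 2 ≤ q * d ω ^ 2 := by
      simp only [q]; nlinarith [sq_nonneg (lam * d ω)]
    linarith
  have hquad_eq : μ[fun ω => 1 + lam * d ω + q * d ω ^ 2 | m] =ᵐ[μ]
      fun ω => 1 + lam * μ[d | m] ω + q * μ[fun ω' => d ω' ^ 2 | m] ω := by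
    have hsplit : (fun ω => 1 + lam * d ω + q * d ω ^ 2) =
        (fun _ => (1 : ℝ)) + lam • d + q • fun ω => d ω ^ 2 := rfl
    rw [hsplit]
    filter_upwards [condExp_add ((integrable_const 1).add (hd.smul lam)) (hd2.smul q) m,
      condExp_add (integrable_const 1) (hd.smul lam) m, condExp_smul (μ := μ) lam d m,
      condExp_smul (μ := μ) q (fun ω' => d ω' ^ 2) m] with ω e1 e2 e3 e4
    rw [e1, Pi.add_apply, e2, Pi.add_apply, e3, e4, condExp_const hm]
    rfl
  filter_upwards [condExp_mono (m := m) (integrable_exp_mul_of_ae_le hd.1 hdM hlam) hquad hexp_le,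
    hquad_eq, hcond] with ω hmono hquadω hcondω
  rw [hquadω] at hmono
  calc μ[fun ω => Real.exp (lam * d ω) | m] ω ≤ 1 + q * μ[fun ω' => d ω' ^ 2 | m] ω := by
        nlinarith [mul_nonpos_of_nonneg_of_nonpos hlam hcondω]
    _ ≤ Real.exp (q * μ[fun ω' => d ω' ^ 2 | m] ω) := by
        linarith [Real.add_one_le_exp (q * μ[fun ω' => d ω' ^ 2 | m] ω)]

noncomputable def compensatedExp (μ : Measure Ω) (m : MeasurableSpace Ω) (c lam : ℝ)
    (d : Ω → ℝ) : Ω → ℝ :=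
  fun ω => Real.exp (lam * d ω - 1 / 2 * lam ^ 2 * c * μ[fun ω' => d ω' ^ 2 | m] ω)

lemma aestronglyMeasurable_compensatedExp (hm : m ≤ mΩ) {d : Ω → ℝ}
    (hd : AEStronglyMeasurable d μ) (c lam : ℝ) :
    AEStronglyMeasurable (compensatedExp μ m c lam d) μ := by
  have := (stronglyMeasurable_condExp (m := m) (μ := μ) (f := fun ω' => d ω' ^ 2)).mono hm
  unfold compensatedExp
  fun_prop

lemma norm_compensatedExp_le {d : Ω → ℝ} {M c lam : ℝ} (hdM : ∀ᵐ ω ∂μ, d ω ≤ M)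
    (hlam : 0 ≤ lam) (hc : 0 ≤ c) :
    ∀ᵐ ω ∂μ, ‖compensatedExp μ m c lam d ω‖ ≤ Real.exp (lam * M) := by
  have hsq : 0 ≤ᵐ[μ] μ[fun ω => d ω ^ 2 | m] := condExp_nonneg (.of_forall fun ω => sq_nonneg _)
  filter_upwards [hdM, hsq] with ω hdω hsqω
  rw [compensatedExp, Real.norm_of_nonneg (Real.exp_nonneg _), Real.exp_le_exp]
  have : 0 ≤ 1 / 2 * lam ^ 2 * c * μ[fun ω => d ω ^ 2 | m] ω := mul_nonneg (by positivity) hsqω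
  nlinarith [mul_le_mul_of_nonneg_left hdω hlam]

lemma condExp_compensatedExp_le_one [IsFiniteMeasure μ] (hm : m ≤ mΩ) {d : Ω → ℝ} {M c lam : ℝ}
    (hd : Integrable d μ) (hd2 : Integrable (fun ω => d ω ^ 2) μ) (hcond : μ[d | m] ≤ᵐ[μ] 0)
    (hdM : ∀ᵐ ω ∂μ, d ω ≤ M) (hlam : 0 ≤ lam) (hlamM0 : 0 ≤ lam * M) (hlamM1 : lam * M ≤ 1)
    (hc : 1 + lam * M / 2 ≤ c) :
    μ[compensatedExp μ m c lam d | m] ≤ᵐ[μ] 1 := by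
  set g := fun ω => 1 / 2 * lam ^ 2 * c * μ[fun ω' => d ω' ^ 2 | m] ω
  have hsplit : compensatedExp μ m c lam d =
      (fun ω => Real.exp (-g ω)) * fun ω => Real.exp (lam * d ω) := by
    funext ω
    rw [compensatedExp, Pi.mul_apply, ← Real.exp_add, neg_add_eq_sub]
  have hint : Integrable (compensatedExp μ m c lam d) μ :=
    .of_bound (aestronglyMeasurable_compensatedExp hm hd.1 c lam) _
      (norm_compensatedExp_le hdM hlam (by linarith))
  have hg : StronglyMeasurable[m] fun ω => Real.exp (-g ω) := by
    have := stronglyMeasurable_condExp (m := m) (μ := μ) (f := fun ω' => d ω' ^ 2)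
    fun_prop
  have hpull := condExp_mul_of_stronglyMeasurable_left hg (hsplit ▸ hint)
    (integrable_exp_mul_of_ae_le hd.1 hdM hlam)
  filter_upwards [hpull, condExp_exp_mul_le hm hd hd2 hcond hdM hlam hlamM0 hlamM1 hc]
    with ω hpullω hexpω
  rw [hsplit, hpullω, Pi.mul_apply, Pi.one_apply]
  calc Real.exp (-g ω) * μ[fun ω => Real.exp (lam * d ω) | m] ω
      ≤ Real.exp (-g ω) * Real.exp (g ω) := mul_le_mul_of_nonneg_left hexpω (Real.exp_nonneg _)
    _ = 1 := by rw [← Real.exp_add, neg_add_cancel, Real.exp_zero]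

end

theorem stmt_11_general {Ω : Type*} {mΩ : MeasurableSpace Ω} {μ : Measure Ω}
    [IsProbabilityMeasure μ] (ℱ : Filtration ℕ mΩ)
    (M lam0 : ℝ) (hM : 0 < M) (hlam0' : lam0 ≤ M⁻¹)
    (d : ℕ → Ω → ℝ)
    (hadp : ∀ n, StronglyMeasurable[ℱ (n + 1)] (d (n + 1)))
    (hint : ∀ n, Integrable (d (n + 1)) μ)
    (hint2 : ∀ n, Integrable (fun ω => (d (n + 1) ω) ^ 2) μ)
    (hcond : ∀ n, ∀ᵐ ω ∂μ, (μ[d (n + 1) | ℱ n]) ω ≤ 0)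
    (hbdd : ∀ n, ∀ᵐ ω ∂μ, d (n + 1) ω ≤ M)
    (lam : ℝ) (hlam : 0 ≤ lam) (hlam' : lam ≤ lam0) :
    Supermartingale
      (fun n ω => Real.exp (lam * (∑ i ∈ Finset.range n, d (i + 1) ω) -
        (1 / 2) * lam ^ 2 * ((1 + (1 / 2) * lam0 * M) *
          ∑ i ∈ Finset.range n, (μ[fun ω' => (d (i + 1) ω') ^ 2 | ℱ i]) ω))) ℱ μ := by
  set c := 1 + 1 / 2 * lam0 * M
  have hlamM : lam * M ≤ lam0 * M := mul_le_mul_of_nonneg_right hlam' hM.le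
  have hlam0M : lam0 * M ≤ 1 := by rwa [← le_div_iff₀ hM, one_div]
  have hlamM0 : 0 ≤ lam * M := mul_nonneg hlam hM.le
  have hc : 1 + lam * M / 2 ≤ c := by simp only [c]; linarith
  refine supermartingale_of_succ_eq_mul (Z := fun n => compensatedExp μ (ℱ n) c lam (d (n + 1)))
    (fun n => ?_) (by simp) (fun n => .of_forall fun ω => (Real.exp_pos _).le) (fun n => ?_)
    (fun n => aestronglyMeasurable_compensatedExp (ℱ.le n) (hint n).1 c lam)
    (fun n => norm_compensatedExp_le (hbdd n) hlam (by linarith))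
    (fun n => condExp_compensatedExp_le_one (ℱ.le n) (hint n) (hint2 n) (hcond n) (hbdd n) hlam
      hlamM0 (hlamM.trans hlam0M) hc)
  · have hsum : StronglyMeasurable[ℱ n] fun ω => ∑ i ∈ Finset.range n, d (i + 1) ω :=
      Finset.stronglyMeasurable_fun_sum _ fun i hi => (hadp i).mono (ℱ.mono (Finset.mem_range.1 hi))
    have hvar : StronglyMeasurable[ℱ n]
        fun ω => ∑ i ∈ Finset.range n, μ[fun ω' => d (i + 1) ω' ^ 2 | ℱ i] ω :=
      Finset.stronglyMeasurable_fun_sum _ fun i hi =>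
        stronglyMeasurable_condExp.mono (ℱ.mono (Finset.mem_range.1 hi).le)
    fun_prop
  · funext ω
    simp only [compensatedExp, Finset.sum_range_succ, Pi.mul_apply, ← Real.exp_add]
    ring_nf

/-- Lemma 1.5. -/
theorem stmt_11 {Ω : Type*} {mΩ : MeasurableSpace Ω} {μ : Measure Ω}
    [IsProbabilityMeasure μ] (ℱ : Filtration ℕ mΩ)
    (M lam0 : ℝ) (hM : 0 < M) (hlam0 : 0 < lam0) (hlam0' : lam0 ≤ M⁻¹)
    (d : ℕ → Ω → ℝ)
    (hadp : ∀ n, StronglyMeasurable[ℱ (n + 1)] (d (n + 1)))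
    (hint : ∀ n, Integrable (d (n + 1)) μ)
    (hint2 : ∀ n, Integrable (fun ω => (d (n + 1) ω) ^ 2) μ)
    (hcond : ∀ n, ∀ᵐ ω ∂μ, (μ[d (n + 1) | ℱ n]) ω ≤ 0)
    (hbdd : ∀ n, ∀ᵐ ω ∂μ, d (n + 1) ω ≤ M)
    (lam : ℝ) (hlam : 0 ≤ lam) (hlam' : lam ≤ lam0) :
    Supermartingale
      (fun n ω => Real.exp (lam * (∑ i ∈ Finset.range n, d (i + 1) ω) -
        (1 / 2) * lam ^ 2 * ((1 + (1 / 2) * lam0 * M) *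
          ∑ i ∈ Finset.range n, (μ[fun ω' => (d (i + 1) ω') ^ 2 | ℱ i]) ω))) ℱ μ :=
  stmt_11_general ℱ M lam0 hM hlam0' d hadp hint hint2 hcond hbdd lam hlam hlam'
end

section
/- Let 1 < r ≤ 2 and λ₀ > 0. Let (A_n)_{n≥0} and (B_n)_{n≥0} be stochastic processes adapted to a filtration (F_n)_{n≥0} such that A₀ = 0, B_n > 0 and B_n is nondecreasing in n for n ≥ 1, and such that for every 0 < λ < λ₀ the process ( exp( λA_n − (λB_n)^r/r ) )_{n ≥ 0} is a supermartingale with mean ≤ 1. Then, almost surely on the event { lim_{n→∞} B_n = ∞ }, limsup_{n→∞} A_n / ( B_n·(log log B_n)^{(r−1)/r} ) ≤ ( r/(r−1) )^{(r−1)/r}. -/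
/-!
For fixed `λ`, Ville's maximal inequality for the nonnegative supermartingale
`exp (λ A_n - (λ B_n)^r / r)` bounds the probability that `A` ever reaches a level `a` while
`B ≤ b`. Peel along the geometric grid `b = c^(k+1)` (`c > 1`), choosing at level `k` the
threshold `a_k ≈ c^(k+1) (c r/(r-1) log log c^k)^((r-1)/r)` and the optimal `λ_k → 0`: the
probabilities become `(k log c)^(-c)`, which are summable, so by Borel–Cantelli almost surely
only finitely many levels are crossed. This gives `limsup ≤ c (c r/(r-1))^((r-1)/r)`, and
letting `c ↓ 1` finishes the proof.
-/

open MeasureTheory Filter Topology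

namespace MeasureTheory

section Ville

variable {Ω : Type*} {mΩ : MeasurableSpace Ω} {μ : Measure Ω} [IsFiniteMeasure μ]
  {ℱ : Filtration ℕ mΩ} {M : ℕ → Ω → ℝ}

theorem Supermartingale.measure_exists_le_ge_le (hM : Supermartingale M ℱ μ) (hnn : 0 ≤ M)
    {ε : ℝ} (hε : 0 < ε) (n : ℕ) :
    μ {ω | ∃ k ≤ n, ε ≤ M k ω} ≤ ENNReal.ofReal ((∫ ω, M 0 ω ∂μ) / ε) := by
  set τ : Ω → ℕ∞ := fun ω ↦ (hittingBtwn M (Set.Ici ε) 0 n ω : ℕ)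
  have hτ : IsStoppingTime ℱ τ :=
    hM.stronglyAdapted.adapted.isStoppingTime_hittingBtwn measurableSet_Ici
  have hτn (ω : Ω) : τ ω ≤ n := Nat.cast_le.2 (hittingBtwn_le ω)
  have hint : Integrable (stoppedValue M τ) μ :=
    (integrable_neg_iff (f := stoppedValue M τ)).1 (hM.neg.integrable_stoppedValue hτ hτn)
  have hmean : ∫ ω, stoppedValue M τ ω ∂μ ≤ ∫ ω, M 0 ω ∂μ := by
    have := hM.neg.expected_stoppedValue_mono (isStoppingTime_const ℱ 0) hτ
      (fun ω ↦ zero_le) hτn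
    simpa [stoppedValue, integral_neg] using this
  have hmarkov : ε * μ.real {ω | ε ≤ stoppedValue M τ ω} ≤ ∫ ω, M 0 ω ∂μ :=
    (mul_meas_ge_le_integral_of_nonneg (ae_of_all _ fun ω ↦ hnn _ ω) hint ε).trans hmean
  calc μ {ω | ∃ k ≤ n, ε ≤ M k ω} ≤ μ {ω | ε ≤ stoppedValue M τ ω} :=
        measure_mono fun ω ⟨k, hk, hMk⟩ ↦ stoppedValue_hittingBtwn_mem ⟨k, ⟨zero_le, hk⟩, hMk⟩
    _ ≤ ENNReal.ofReal ((∫ ω, M 0 ω ∂μ) / ε) := by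
        rw [ENNReal.le_ofReal_iff_toReal_le (measure_ne_top _ _)
          (div_nonneg (integral_nonneg fun ω ↦ hnn 0 ω) hε.le), le_div_iff₀ hε, mul_comm]
        exact hmarkov

/-- **Ville's inequality**. -/
theorem Supermartingale.measure_exists_ge_le (hM : Supermartingale M ℱ μ) (hnn : 0 ≤ M)
    {ε : ℝ} (hε : 0 < ε) :
    μ {ω | ∃ k, ε ≤ M k ω} ≤ ENNReal.ofReal ((∫ ω, M 0 ω ∂μ) / ε) := by
  have hunion : {ω | ∃ k, ε ≤ M k ω} = ⋃ n, {ω | ∃ k ≤ n, ε ≤ M k ω} := by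
    ext ω; simpa using ⟨fun ⟨k, hk⟩ ↦ ⟨k, k, le_rfl, hk⟩, fun ⟨_, k, _, hk⟩ ↦ ⟨k, hk⟩⟩
  rw [hunion, Monotone.measure_iUnion]
  · exact iSup_le (hM.measure_exists_le_ge_le hnn hε)
  · exact fun m n hmn ω ⟨k, hk, hMk⟩ ↦ ⟨k, hk.trans hmn, hMk⟩

theorem measure_exists_ge_le_exp {A B : ℕ → Ω → ℝ} {r lam a b : ℝ} (hr : 0 < r) (hlam : 0 ≤ lam)
    (hM : Supermartingale (fun n ω ↦ Real.exp (lam * A n ω - (lam * B n ω) ^ r / r)) ℱ μ)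
    (hM0 : ∫ ω, Real.exp (lam * A 0 ω - (lam * B 0 ω) ^ r / r) ∂μ ≤ 1) :
    μ {ω | ∃ n, 0 ≤ B n ω ∧ B n ω ≤ b ∧ a ≤ A n ω}
      ≤ ENNReal.ofReal (Real.exp (-(lam * a - (lam * b) ^ r / r))) := by
  set x := lam * a - (lam * b) ^ r / r
  have hsubset : {ω | ∃ n, 0 ≤ B n ω ∧ B n ω ≤ b ∧ a ≤ A n ω}
      ⊆ {ω | ∃ n, Real.exp x ≤ Real.exp (lam * A n ω - (lam * B n ω) ^ r / r)} := by
    rintro ω ⟨n, hB0, hBb, haA⟩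
    refine ⟨n, Real.exp_le_exp.2 (sub_le_sub (mul_le_mul_of_nonneg_left haA hlam) ?_)⟩
    gcongr
  calc _ ≤ _ := measure_mono hsubset
    _ ≤ ENNReal.ofReal (1 / Real.exp x) :=
        (hM.measure_exists_ge_le (fun n ω ↦ (Real.exp_pos _).le) (Real.exp_pos x)).trans
          (ENNReal.ofReal_le_ofReal (by gcongr))
    _ = ENNReal.ofReal (Real.exp (-x)) := by rw [Real.exp_neg, one_div]

end Ville

theorem ae_eventually_notMem_of_summable {α : Type*} {mα : MeasurableSpace α}
    {μ : Measure α} {s : ℕ → Set α} {f : ℕ → ℝ} (hf : Summable f)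
    (hs : ∀ᶠ n in atTop, μ (s n) ≤ ENNReal.ofReal (f n)) :
    ∀ᵐ x ∂μ, ∀ᶠ n in atTop, x ∉ s n := by
  obtain ⟨N, hN⟩ := eventually_atTop.1 hs
  have hsum : ∑' n, μ (s (n + N)) ≠ ⊤ :=
    ne_top_of_le_ne_top
      (ENNReal.tsum_coe_ne_top_iff_summable.2 ((summable_nat_add_iff N).2 hf).toNNReal)
      (ENNReal.tsum_le_tsum fun n ↦ hN _ le_add_self)
  filter_upwards [ae_eventually_notMem hsum] with x hx
  filter_upwards [(tendsto_sub_atTop_nat N).eventually hx, eventually_ge_atTop N] with n hn hNn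
  rwa [Nat.sub_add_cancel hNn] at hn

end MeasureTheory

/-- `λ = x^(1/r) / b` maximises `λ a - (λ b)^r / r` at `a = b x^((r-1)/r)`. -/
theorem legendre_exponent_eq {r b x : ℝ} (hr : 0 < r) (hb : 0 < b) (hx : 0 ≤ x) :
    x ^ (1 / r) / b * (b * x ^ ((r - 1) / r)) - (x ^ (1 / r) / b * b) ^ r / r
      = (r - 1) / r * x := by
  have hpow : x ^ (1 / r) * x ^ ((r - 1) / r) = x := by
    rw [← Real.rpow_add' hx (by field_simp; simp [hr.ne']), ← add_div, add_sub_cancel,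
      div_self hr.ne', Real.rpow_one]
  have hlin : x ^ (1 / r) / b * (b * x ^ ((r - 1) / r)) = x := by
    rw [← mul_assoc, div_mul_cancel₀ _ hb.ne', hpow]
  rw [hlin, div_mul_cancel₀ _ hb.ne', ← Real.rpow_mul hx, one_div_mul_cancel hr.ne', Real.rpow_one]
  field_simp

theorem tendsto_rpow_log_log_pow_div_pow {c α p : ℝ} (hc : 1 < c) (hα : 0 ≤ α) (hp0 : 0 ≤ p)
    (hp1 : p ≤ 1) :
    Tendsto (fun k : ℕ ↦ (α * Real.log (Real.log (c ^ k))) ^ p / c ^ (k + 1)) atTop (𝓝 0) := by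
  have hc0 : 0 < c := zero_lt_one.trans hc
  have hgeom : Tendsto (fun k : ℕ ↦ (1 + α * Real.log c * k) / c ^ (k + 1)) atTop (𝓝 0) := by
    have h0 := tendsto_pow_const_div_const_pow_of_one_lt 0 hc
    have h1 := tendsto_pow_const_div_const_pow_of_one_lt 1 hc
    have := (h0.add (h1.const_mul (α * Real.log c))).div_const c
    simp only [pow_zero, pow_one, mul_zero, add_zero, zero_div] at this
    refine this.congr fun k ↦ ?_
    rw [pow_succ]; field_simp
  have hlog : ∀ᶠ k : ℕ in atTop, 1 ≤ Real.log (c ^ k) := by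
    filter_upwards [(tendsto_pow_atTop_atTop_of_one_lt hc).eventually_ge_atTop (Real.exp 1)]
      with k hk
    rwa [Real.le_log_iff_exp_le (pow_pos hc0 k)]
  refine squeeze_zero' ?_ ?_ hgeom
  · filter_upwards [hlog] with k hk
    have := Real.log_nonneg hk
    positivity
  · filter_upwards [hlog] with k hk
    set y := α * Real.log (Real.log (c ^ k))
    have hy0 : 0 ≤ y := mul_nonneg hα (Real.log_nonneg hk)
    have hy : y ≤ α * Real.log c * k := by
      rw [mul_assoc, mul_comm (Real.log c), ← Real.log_pow]
      exact mul_le_mul_of_nonneg_left (Real.log_le_self (by linarith)) hα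
    have hyp : y ^ p ≤ 1 + y := by
      rcases le_total y 1 with hy1 | hy1
      · linarith [Real.rpow_le_one hy0 hy1 hp0]
      · linarith [Real.rpow_le_self_of_one_le hy1 hp1]
    gcongr
    linarith

/-- Peeling: `g n` lies in some block `[c^k, c^(k+1))`, where the bound of level `k` applies. -/
theorem eventually_lt_of_pow_blocks {c T : ℝ} {ψ : ℝ → ℝ} {f g : ℕ → ℝ} (hc : 1 < c)
    (hψ : MonotoneOn ψ (Set.Ici T)) (hg : Tendsto g atTop atTop)
    (h : ∀ᶠ k in atTop, ∀ n, 0 ≤ g n → g n ≤ c ^ (k + 1) → f n < ψ (c ^ k)) :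
    ∀ᶠ n in atTop, f n < ψ (g n) := by
  obtain ⟨K, hK⟩ := eventually_atTop.1 <|
    h.and ((tendsto_pow_atTop_atTop_of_one_lt hc).eventually_ge_atTop (max T 1))
  filter_upwards [hg.eventually_ge_atTop (c ^ K)] with n hn
  have hg1 : 1 ≤ g n := (le_max_right _ _).trans ((hK K le_rfl).2.trans hn)
  obtain ⟨k, hck, hck1⟩ := exists_nat_pow_near hg1 hc
  have hKk : K ≤ k := Nat.lt_succ_iff.1 <| (pow_lt_pow_iff_right₀ hc).1 (hn.trans_lt hck1)
  have hTk := (le_max_left _ _).trans (hK k hKk).2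
  calc f n < ψ (c ^ k) := (hK k hKk).1 n (by linarith) hck1.le
    _ ≤ ψ (g n) := hψ hTk (hTk.trans hck) hck

noncomputable def lilThreshold (r c u : ℝ) : ℝ :=
  c * u * (c * (r / (r - 1)) * Real.log (Real.log u)) ^ ((r - 1) / r)

theorem lilThreshold_monotoneOn {r c : ℝ} (hr : 1 < r) (hc : 0 ≤ c) :
    MonotoneOn (lilThreshold r c) (Set.Ici (Real.exp 1)) := by
  intro u hu v hv huv
  have hu0 : 0 < u := (Real.exp_pos 1).trans_le hu
  have hv0 : 0 < v := hu0.trans_le huv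
  have hlogu : 1 ≤ Real.log u := (Real.le_log_iff_exp_le hu0).2 hu
  have := Real.log_nonneg hlogu
  have : 0 < r - 1 := sub_pos.2 hr
  unfold lilThreshold
  gcongr

theorem lilThreshold_eq {r c u : ℝ} (hr : 1 < r) (hc : 0 ≤ c) (hu : 0 ≤ Real.log (Real.log u)) :
    lilThreshold r c u
      = c * (c * (r / (r - 1))) ^ ((r - 1) / r) * (u * Real.log (Real.log u) ^ ((r - 1) / r)) := by
  have : 0 < r - 1 := sub_pos.2 hr
  rw [lilThreshold, Real.mul_rpow (by positivity) hu]
  ring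

theorem measure_exists_ge_lilThreshold_le {Ω : Type*} {mΩ : MeasurableSpace Ω} {μ : Measure Ω}
    [IsFiniteMeasure μ] {ℱ : Filtration ℕ mΩ} {r c lam : ℝ} {A B : ℕ → Ω → ℝ} {k : ℕ}
    (hr : 1 < r) (hc : 0 < c) (hk : 1 < Real.log (c ^ k))
    (hlam : lam = (c * (r / (r - 1)) * Real.log (Real.log (c ^ k))) ^ (1 / r) / c ^ (k + 1))
    (hM : Supermartingale (fun n ω ↦ Real.exp (lam * A n ω - (lam * B n ω) ^ r / r)) ℱ μ)
    (hM0 : ∫ ω, Real.exp (lam * A 0 ω - (lam * B 0 ω) ^ r / r) ∂μ ≤ 1) :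
    μ {ω | ∃ n, 0 ≤ B n ω ∧ B n ω ≤ c ^ (k + 1) ∧ lilThreshold r c (c ^ k) ≤ A n ω}
      ≤ ENNReal.ofReal (Real.log (c ^ k) ^ (-c)) := by
  have hr0 : 0 < r := zero_lt_one.trans hr
  have hr1 : 0 < r - 1 := sub_pos.2 hr
  set x := c * (r / (r - 1)) * Real.log (Real.log (c ^ k))
  have hx : 0 < x := by have := Real.log_pos hk; positivity
  have hexp : (r - 1) / r * x = c * Real.log (Real.log (c ^ k)) := by
    simp only [x]; field_simp
  calc _ = μ {ω | ∃ n, 0 ≤ B n ω ∧ B n ω ≤ c ^ (k + 1) ∧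
          c ^ (k + 1) * x ^ ((r - 1) / r) ≤ A n ω} := by simp only [lilThreshold, x, pow_succ']
    _ ≤ ENNReal.ofReal (Real.exp (-((r - 1) / r * x))) := by
        rw [← legendre_exponent_eq hr0 (pow_pos hc (k + 1)) hx.le, ← hlam]
        exact measure_exists_ge_le_exp hr0 (hlam ▸ by positivity) hM hM0
    _ = ENNReal.ofReal (Real.log (c ^ k) ^ (-c)) := by
        rw [hexp, Real.rpow_def_of_pos (zero_lt_one.trans hk), mul_neg, mul_comm]

theorem ae_limsup_le_of_one_lt {Ω : Type*} {mΩ : MeasurableSpace Ω} {μ : Measure Ω}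
    [IsFiniteMeasure μ] {ℱ : Filtration ℕ mΩ} {r lam0 c : ℝ} {A B : ℕ → Ω → ℝ}
    (hr : 1 < r) (hlam0 : 0 < lam0) (hc : 1 < c)
    (hsm : ∀ lam : ℝ, 0 < lam → lam < lam0 →
      Supermartingale
        (fun n ω ↦ Real.exp (lam * A n ω - (lam * B n ω) ^ r / r)) ℱ μ ∧
      ∀ n, ∫ ω, Real.exp (lam * A n ω - (lam * B n ω) ^ r / r) ∂μ ≤ 1) :
    ∀ᵐ ω ∂μ, Tendsto (fun n ↦ B n ω) atTop atTop →
      limsup (fun n ↦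
          ((A n ω / (B n ω * (Real.log (Real.log (B n ω))) ^ ((r - 1) / r)) : ℝ) : EReal))
        atTop ≤ ((c * (c * (r / (r - 1))) ^ ((r - 1) / r) : ℝ) : EReal) := by
  have hr0 : 0 < r := zero_lt_one.trans hr
  have hc0 : 0 < c := zero_lt_one.trans hc
  set lam : ℕ → ℝ := fun k ↦
    (c * (r / (r - 1)) * Real.log (Real.log (c ^ k))) ^ (1 / r) / c ^ (k + 1)
  have hlam : Tendsto lam atTop (𝓝 0) :=
    tendsto_rpow_log_log_pow_div_pow hc (by have := sub_pos.2 hr; positivity) (by positivity)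
      ((div_le_one hr0).2 hr.le)
  have hlogpow : Tendsto (fun k : ℕ ↦ Real.log (c ^ k)) atTop atTop :=
    Real.tendsto_log_atTop.comp (tendsto_pow_atTop_atTop_of_one_lt hc)
  have hlevel : ∀ᶠ k in atTop,
      μ {ω | ∃ n, 0 ≤ B n ω ∧ B n ω ≤ c ^ (k + 1) ∧ lilThreshold r c (c ^ k) ≤ A n ω}
        ≤ ENNReal.ofReal (Real.log (c ^ k) ^ (-c)) := by
    filter_upwards [hlam.eventually_lt_const hlam0, hlogpow.eventually_gt_atTop 1]
      with k hk hk1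
    have hlam_pos : 0 < lam k := by
      have := Real.log_pos hk1; have := sub_pos.2 hr; positivity
    exact measure_exists_ge_lilThreshold_le hr hc0 hk1 rfl (hsm _ hlam_pos hk).1
      ((hsm _ hlam_pos hk).2 0)
  have hsum : Summable fun k : ℕ ↦ Real.log (c ^ k) ^ (-c) := by
    simp_rw [Real.log_pow]
    exact ((Real.summable_nat_rpow.2 (by linarith)).mul_right (Real.log c ^ (-c))).congr
      fun k ↦ (Real.mul_rpow (Nat.cast_nonneg k) (Real.log_pos hc).le).symm
  filter_upwards [ae_eventually_notMem_of_summable hsum hlevel] with ω hω hB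
  have hA : ∀ᶠ n in atTop, A n ω < lilThreshold r c (B n ω) := by
    refine eventually_lt_of_pow_blocks hc (lilThreshold_monotoneOn hr hc0.le) hB ?_
    filter_upwards [hω] with k hk n hn0 hnk
    by_contra! h
    exact hk ⟨n, hn0, hnk, h⟩
  refine limsup_le_of_le (by isBoundedDefault) ?_
  filter_upwards [hA, hB.eventually_gt_atTop (Real.exp 1)] with n hn hBn
  have hB0 : 0 < B n ω := (Real.exp_pos 1).trans hBn
  have hL : 0 < Real.log (Real.log (B n ω)) := Real.log_pos ((Real.lt_log_iff_exp_lt hB0).2 hBn)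
  rw [EReal.coe_le_coe_iff, div_le_iff₀ (by positivity)]
  exact hn.le.trans_eq (lilThreshold_eq hr hc0.le hL.le)

theorem stmt_14_general {Ω : Type*} {mΩ : MeasurableSpace Ω} {μ : Measure Ω}
    [IsProbabilityMeasure μ] (ℱ : Filtration ℕ mΩ)
    (r lam0 : ℝ) (hr1 : 1 < r) (hlam0 : 0 < lam0)
    (A B : ℕ → Ω → ℝ)
    (hsm : ∀ lam : ℝ, 0 < lam → lam < lam0 →
      Supermartingale
        (fun n ω => Real.exp (lam * A n ω - (lam * B n ω) ^ r / r)) ℱ μ ∧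
      ∀ n, ∫ ω, Real.exp (lam * A n ω - (lam * B n ω) ^ r / r) ∂μ ≤ 1) :
    ∀ᵐ ω ∂μ, Tendsto (fun n => B n ω) atTop atTop →
      Filter.limsup (fun n =>
          ((A n ω / (B n ω * (Real.log (Real.log (B n ω))) ^ ((r - 1) / r)) : ℝ) : EReal))
        atTop ≤ (((r / (r - 1)) ^ ((r - 1) / r) : ℝ) : EReal) := by
  set c : ℕ → ℝ := fun m ↦ 1 + 1 / ((m : ℝ) + 1)
  have hc (m : ℕ) : 1 < c m := lt_add_of_pos_right 1 (by positivity)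
  have hc1 : Tendsto c atTop (𝓝 1) := by
    simpa only [add_zero] using tendsto_one_div_add_atTop_nhds_zero_nat.const_add (1 : ℝ)
  have hbound : Tendsto (fun m ↦ c m * (c m * (r / (r - 1))) ^ ((r - 1) / r)) atTop
      (𝓝 ((r / (r - 1)) ^ ((r - 1) / r))) := by
    have hq : 0 ≤ (r - 1) / r := div_nonneg (sub_nonneg.2 hr1.le) (zero_le_one.trans hr1.le)
    simpa using hc1.mul ((hc1.mul_const (r / (r - 1))).rpow_const (Or.inr hq))
  filter_upwards [ae_all_iff.2 fun m ↦ ae_limsup_le_of_one_lt hr1 hlam0 (hc m) hsm]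
    with ω hω hB
  exact ge_of_tendsto' (EReal.tendsto_coe.2 hbound) fun m ↦ hω m hB

/-- Corollary 4.2 (discrete time). -/
theorem stmt_14 {Ω : Type*} {mΩ : MeasurableSpace Ω} {μ : Measure Ω}
    [IsProbabilityMeasure μ] (ℱ : Filtration ℕ mΩ)
    (r lam0 : ℝ) (hr1 : 1 < r) (hr2 : r ≤ 2) (hlam0 : 0 < lam0)
    (A B : ℕ → Ω → ℝ)
    (hAadp : Adapted ℱ A) (hBadp : Adapted ℱ B)
    (hA0 : ∀ ω, A 0 ω = 0)
    (hBpos : ∀ n, 1 ≤ n → ∀ ω, 0 < B n ω)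
    (hBmono : ∀ m n : ℕ, 1 ≤ m → m ≤ n → ∀ ω, B m ω ≤ B n ω)
    (hsm : ∀ lam : ℝ, 0 < lam → lam < lam0 →
      Supermartingale
        (fun n ω => Real.exp (lam * A n ω - (lam * B n ω) ^ r / r)) ℱ μ ∧
      ∀ n, ∫ ω, Real.exp (lam * A n ω - (lam * B n ω) ^ r / r) ∂μ ≤ 1) :
    ∀ᵐ ω ∂μ, Tendsto (fun n => B n ω) atTop atTop →
      Filter.limsup (fun n =>
          ((A n ω / (B n ω * (Real.log (Real.log (B n ω))) ^ ((r - 1) / r)) : ℝ) : EReal))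
        atTop ≤ (((r / (r - 1)) ^ ((r - 1) / r) : ℝ) : EReal) :=
  stmt_14_general ℱ r lam0 hr1 hlam0 A B hsm
end

section
/- For 0 ≤ γ < 1 define C_γ = Σ_{j=2}^∞ γ^{j−2}/j (so that C_γ = −{γ + log(1−γ)}/γ² when γ > 0). Let Y be a random variable with Y ≥ −γ almost surely and E|Y| < ∞. Then E[ exp( Y − E Y − C_γ·Y² ) ] ≤ 1. -/
/-!
For `y ≥ -γ` one has `y - C_γ y² ≤ log (1 + y)`: for `y ≥ 0` because `C_γ ≥ 1/2`, and for
`y = -t ∈ [-γ, 0]` by comparing `-log (1 - t) - t = ∑ tʲ⁺²/(j+2)` termwise with `C_γ t²`.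
Hence `exp (Y - C_γ Y²) ≤ 1 + Y`, and taking expectations,
`E exp (Y - E Y - C_γ Y²) ≤ e^{-E Y} (1 + E Y) ≤ 1`.
-/

open MeasureTheory

namespace Real

lemma summable_pow_div_add_two {γ : ℝ} (hγ0 : 0 ≤ γ) (hγ1 : γ < 1) :
    Summable (fun j : ℕ => γ ^ j / ((j : ℝ) + 2)) := by
  refine Summable.of_nonneg_of_le (fun j => by positivity) (fun j => ?_)
    (summable_geometric_of_lt_one hγ0 hγ1)
  exact div_le_self (pow_nonneg hγ0 j) (by linarith [j.cast_nonneg (α := ℝ)])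

lemma one_half_le_tsum_pow_div_add_two {γ : ℝ} (hγ0 : 0 ≤ γ) (hγ1 : γ < 1) :
    1 / 2 ≤ ∑' j : ℕ, γ ^ j / ((j : ℝ) + 2) := by
  simpa using (summable_pow_div_add_two hγ0 hγ1).le_tsum 0 (fun j _ => by positivity)

lemma hasSum_pow_add_two_div_add_two {t : ℝ} (ht : |t| < 1) :
    HasSum (fun n : ℕ => t ^ (n + 2) / ((n : ℝ) + 2)) (-log (1 - t) - t) := by
  simpa [add_assoc, one_add_one_eq_two] using
    (hasSum_nat_add_iff' 1).mpr (hasSum_pow_div_log_of_abs_lt_one ht)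

lemma neg_log_one_sub_sub_le_tsum_mul_sq {γ t : ℝ} (hγ1 : γ < 1) (ht0 : 0 ≤ t) (htγ : t ≤ γ) :
    -log (1 - t) - t ≤ (∑' j : ℕ, γ ^ j / ((j : ℝ) + 2)) * t ^ 2 := by
  have ht1 : |t| < 1 := by rw [abs_of_nonneg ht0]; linarith
  refine hasSum_le (fun n => ?_) (hasSum_pow_add_two_div_add_two ht1)
    ((summable_pow_div_add_two (ht0.trans htγ) hγ1).hasSum.mul_right (t ^ 2))
  rw [pow_add, div_mul_eq_mul_div]
  gcongr

lemma sub_tsum_mul_sq_le_log_one_add {γ y : ℝ} (hγ0 : 0 ≤ γ) (hγ1 : γ < 1) (hy : -γ ≤ y) :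
    y - (∑' j : ℕ, γ ^ j / ((j : ℝ) + 2)) * y ^ 2 ≤ log (1 + y) := by
  rcases le_total y 0 with hy0 | hy0
  · have h := neg_log_one_sub_sub_le_tsum_mul_sq hγ1 (neg_nonneg.mpr hy0) (neg_le.mp hy)
    simp only [sub_neg_eq_add, neg_sq] at h
    linarith
  · have hC := one_half_le_tsum_pow_div_add_two hγ0 hγ1
    -- `y - y²/2 ≤ 2y/(y+2)`, the difference being `y³/(2(y+2))`
    have hpade : y - y ^ 2 / 2 ≤ 2 * y / (y + 2) := by
      rw [le_div_iff₀ (by linarith)]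
      nlinarith [pow_nonneg hy0 3]
    nlinarith [le_log_one_add_of_nonneg hy0, sq_nonneg y]

lemma exp_sub_tsum_mul_sq_le_one_add {γ y : ℝ} (hγ0 : 0 ≤ γ) (hγ1 : γ < 1) (hy : -γ ≤ y) :
    exp (y - (∑' j : ℕ, γ ^ j / ((j : ℝ) + 2)) * y ^ 2) ≤ 1 + y :=
  (le_log_iff_exp_le (by linarith)).mp (sub_tsum_mul_sq_le_log_one_add hγ0 hγ1 hy)

end Real

lemma lintegral_ofReal_exp_sub_integral_le_one {Ω : Type*} {mΩ : MeasurableSpace Ω}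
    {μ : Measure Ω} [IsProbabilityMeasure μ] {Y g : Ω → ℝ} (hY : Integrable Y μ)
    (hg : ∀ᵐ ω ∂μ, Real.exp (g ω) ≤ 1 + Y ω) :
    ∫⁻ ω, ENNReal.ofReal (Real.exp (g ω - ∫ x, Y x ∂μ)) ∂μ ≤ 1 := by
  set m := ∫ x, Y x ∂μ
  have hint : Integrable (fun ω => (1 + Y ω) * Real.exp (-m)) μ :=
    ((integrable_const 1).add hY).mul_const _
  have hnonneg : 0 ≤ᵐ[μ] fun ω => (1 + Y ω) * Real.exp (-m) := by
    filter_upwards [hg] with ω hω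
    exact mul_nonneg ((Real.exp_pos _).le.trans hω) (Real.exp_pos _).le
  have hmean : ∫ ω, (1 + Y ω) * Real.exp (-m) ∂μ = (1 + m) * Real.exp (-m) := by
    rw [integral_mul_const, integral_add (integrable_const 1) hY]
    simp [m]
  calc ∫⁻ ω, ENNReal.ofReal (Real.exp (g ω - m)) ∂μ
      ≤ ∫⁻ ω, ENNReal.ofReal ((1 + Y ω) * Real.exp (-m)) ∂μ := by
        refine lintegral_mono_ae ?_
        filter_upwards [hg] with ω hω
        rw [sub_eq_add_neg, Real.exp_add]
        exact ENNReal.ofReal_le_ofReal (mul_le_mul_of_nonneg_right hω (Real.exp_pos _).le)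
    _ = ENNReal.ofReal ((1 + m) * Real.exp (-m)) := by
        rw [← ofReal_integral_eq_lintegral_ofReal hint hnonneg, hmean]
    _ ≤ ENNReal.ofReal (Real.exp m * Real.exp (-m)) :=
        ENNReal.ofReal_le_ofReal (mul_le_mul_of_nonneg_right
          (by linarith [Real.add_one_le_exp m]) (Real.exp_pos _).le)
    _ = 1 := by rw [← Real.exp_add, add_neg_cancel, Real.exp_zero, ENNReal.ofReal_one]

/-- Lemma 5.1 (second part). -/
theorem stmt_15 {Ω : Type*} {mΩ : MeasurableSpace Ω} {μ : Measure Ω}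
    [IsProbabilityMeasure μ]
    (γ : ℝ) (hγ0 : 0 ≤ γ) (hγ1 : γ < 1)
    (Y : Ω → ℝ) (hY : Integrable Y μ) (hbd : ∀ᵐ ω ∂μ, -γ ≤ Y ω) :
    ∫⁻ ω, ENNReal.ofReal
        (Real.exp (Y ω - (∫ x, Y x ∂μ) -
          (∑' j : ℕ, γ ^ j / ((j : ℝ) + 2)) * (Y ω) ^ 2)) ∂μ ≤ 1 := by
  have h := lintegral_ofReal_exp_sub_integral_le_one hY
    (hbd.mono fun ω hω => Real.exp_sub_tsum_mul_sq_le_one_add hγ0 hγ1 hω)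
  convert h using 5 with ω
  ring
end

section
/- For 0 ≤ γ < 1 define C_γ = Σ_{j=2}^∞ γ^{j−2}/j. Let (F_n)_{n≥0} be a filtration and for each n ≥ 1 let Y_n be an F_n-measurable random variable, and let γ_n and λ_n be F_{n−1}-measurable random variables with 0 ≤ γ_n < 1 and 0 < λ_n ≤ 1/C_{γ_n} a.s. Set μ_n = E[ Y_n·1(−γ_n ≤ Y_n < λ_n) | F_{n−1} ]. Then the process exp( Σ_{i=1}^n ( Y_i − μ_i − λ_i^{−1}Y_i² ) ), n ≥ 1, is a supermartingale with expectation ≤ 1. -/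
/-!
The heart of the matter is the pointwise inequality
`exp (y - y ^ 2 / λ) ≤ 1 + y * 1(-γ ≤ y < λ)` for `0 ≤ γ < 1`, `0 < λ ≤ 1 / C_γ`.
Inside the window it is `y - y ^ 2 / λ ≤ log (1 + y)`: for `y ≥ 0` use `λ ≤ 2` (as `C_γ ≥ 1/2`)
and `log (1 + y) ≥ 2y / (2 + y)`; for `-γ ≤ y < 0` the power series of `log (1 + y)` has tail
`∑_{j ≥ 2} |y| ^ j / j ≤ C_γ y ^ 2`. Outside the window `y - y ^ 2 / λ ≤ 0`.
Taking conditional expectations, `E[exp (Y_n - Y_n ^ 2 / λ_n) | F_{n-1}] ≤ 1 + μ_n ≤ exp μ_n`,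
so every multiplicative increment of the process has conditional mean at most `1`. The truncated
variables are bounded by `2`, so every factor is bounded and integrability is automatic.
-/

open MeasureTheory Real

/-- The paper's `C_γ = ∑_{j ≥ 2} γ ^ (j - 2) / j`, reindexed from `0`. -/
noncomputable def logTailConst (g : ℝ) : ℝ := ∑' j : ℕ, g ^ j / ((j : ℝ) + 2)

noncomputable def truncate (g l y : ℝ) : ℝ := if -g ≤ y ∧ y < l then y else 0

section LogTail

variable {g : ℝ}

lemma summable_logTailConst (hg0 : 0 ≤ g) (hg1 : g < 1) :
    Summable fun j : ℕ => g ^ j / ((j : ℝ) + 2) :=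
  (summable_geometric_of_lt_one hg0 hg1).of_nonneg_of_le (fun _ => by positivity)
    fun j => div_le_self (by positivity) (by linarith [j.cast_nonneg (α := ℝ)])

lemma half_le_logTailConst (hg0 : 0 ≤ g) (hg1 : g < 1) : 1 / 2 ≤ logTailConst g := by
  simpa [logTailConst] using (summable_logTailConst hg0 hg1).le_tsum 0 fun j _ => by positivity

lemma le_two_of_le_inv_logTailConst {l : ℝ} (hg0 : 0 ≤ g) (hg1 : g < 1)
    (hl : l ≤ (logTailConst g)⁻¹) : l ≤ 2 :=
  hl.trans <| by simpa using inv_anti₀ (by norm_num) (half_le_logTailConst hg0 hg1)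

lemma neg_sub_logTailConst_mul_sq_le_log_one_sub {x : ℝ} (hx0 : 0 ≤ x) (hxg : x ≤ g)
    (hg1 : g < 1) : -x - logTailConst g * x ^ 2 ≤ log (1 - x) := by
  have hg0 : 0 ≤ g := hx0.trans hxg
  have hlog := hasSum_pow_div_log_of_abs_lt_one (x := x) (by rw [abs_of_nonneg hx0]; linarith)
  have hshift : -log (1 - x) = x + ∑' n : ℕ, x ^ (n + 2) / ((n : ℝ) + 2) := by
    rw [← hlog.tsum_eq, hlog.summable.tsum_eq_zero_add]
    push_cast
    ring_nf
  have hterm (n : ℕ) : x ^ (n + 2) / ((n : ℝ) + 2) ≤ x ^ 2 * (g ^ n / ((n : ℝ) + 2)) := by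
    rw [pow_add, mul_comm, mul_div_assoc]
    gcongr
  have hdom := (summable_logTailConst hg0 hg1).mul_left (x ^ 2)
  have htail : ∑' n : ℕ, x ^ (n + 2) / ((n : ℝ) + 2) ≤ x ^ 2 * logTailConst g := by
    rw [logTailConst, ← tsum_mul_left]
    exact (hdom.of_nonneg_of_le (fun n => by positivity) hterm).tsum_le_tsum hterm hdom
  linarith

end LogTail

lemma sub_inv_mul_sq_le_quarter {l y : ℝ} (hl : 0 < l) : y - l⁻¹ * y ^ 2 ≤ l / 4 := by
  have := mul_nonneg (inv_nonneg.2 hl.le) (sq_nonneg (y - l / 2))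
  have := inv_mul_cancel₀ hl.ne'
  nlinarith

lemma abs_truncate_le {g l y R : ℝ} (hg : g ≤ R) (hl : l ≤ R) (hR : 0 ≤ R) :
    |truncate g l y| ≤ R := by
  unfold truncate
  split_ifs with hy
  · exact abs_le.2 ⟨by linarith [hy.1], by linarith [hy.2]⟩
  · rwa [abs_zero]

lemma exp_sub_inv_mul_sq_le_one_add_truncate {g l y : ℝ} (hg0 : 0 ≤ g) (hg1 : g < 1)
    (hl0 : 0 < l) (hl : l ≤ (logTailConst g)⁻¹) :
    exp (y - l⁻¹ * y ^ 2) ≤ 1 + truncate g l y := by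
  have hCl : logTailConst g ≤ l⁻¹ := by simpa using inv_anti₀ hl0 hl
  have hl2 : 2⁻¹ ≤ l⁻¹ := inv_anti₀ hl0 (le_two_of_le_inv_logTailConst hg0 hg1 hl)
  unfold truncate
  split_ifs with hy
  · obtain ⟨hgy, hyl⟩ := hy
    rw [← exp_log (by linarith : 0 < 1 + y), exp_le_exp]
    rcases le_or_gt 0 y with hy0 | hy0
    · calc y - l⁻¹ * y ^ 2 ≤ y - 2⁻¹ * y ^ 2 := by nlinarith [sq_nonneg y]
        _ ≤ 2 * y / (y + 2) := by
          rw [le_div_iff₀ (by linarith)]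
          nlinarith [pow_nonneg hy0 3]
        _ ≤ log (1 + y) := le_log_one_add_of_nonneg hy0
    · have h := neg_sub_logTailConst_mul_sq_le_log_one_sub (x := -y) (by linarith) (by linarith) hg1
      rw [sub_neg_eq_add, neg_neg, neg_sq] at h
      nlinarith [sq_nonneg y]
  · rw [add_zero, exp_le_one_iff, sub_nonpos]
    rcases lt_or_ge y (-g) with hyg | hgy
    · nlinarith [sq_nonneg y, inv_nonneg.2 hl0.le]
    · have hly : l ≤ y := le_of_not_gt fun h => hy ⟨hgy, h⟩
      have hy0 : 0 ≤ y := hl0.le.trans hly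
      calc y = l⁻¹ * l * y := by rw [inv_mul_cancel₀ hl0.ne', one_mul]
        _ ≤ l⁻¹ * y * y := by gcongr
        _ = l⁻¹ * y ^ 2 := by ring

section ConditionalStep

variable {Ω : Type*} {m mΩ : MeasurableSpace Ω} {μ : Measure Ω}

lemma ae_abs_le_of_ae_eq_condExp {V a : Ω → ℝ} {R : ℝ} (hVR : ∀ᵐ ω ∂μ, |V ω| ≤ R)
    (haV : a =ᵐ[μ] μ[V|m]) : ∀ᵐ ω ∂μ, |a ω| ≤ R := by
  filter_upwards [haV, ae_bdd_abs_condExp_of_ae_bdd_abs hVR] with ω h1 h2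
  rwa [h1]

lemma condExp_exp_neg_mul_le_one [IsFiniteMeasure μ] (hm : m ≤ mΩ) {V W a : Ω → ℝ} {R : ℝ}
    (hV : Integrable V μ) (hVR : ∀ᵐ ω ∂μ, |V ω| ≤ R) (hW : Integrable W μ)
    (hWV : ∀ᵐ ω ∂μ, W ω ≤ 1 + V ω) (ha : StronglyMeasurable[m] a) (haV : a =ᵐ[μ] μ[V|m]) :
    μ[fun ω => exp (-a ω) * W ω | m] ≤ᵐ[μ] 1 := by
  have hbound : ∀ᵐ ω ∂μ, ‖exp (-a ω)‖ ≤ exp R := by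
    filter_upwards [ae_abs_le_of_ae_eq_condExp hVR haV] with ω h
    rw [norm_of_nonneg (exp_pos _).le, exp_le_exp]
    linarith [neg_abs_le (a ω)]
  have hpull : μ[fun ω => exp (-a ω) * W ω | m] =ᵐ[μ] fun ω => exp (-a ω) * μ[W|m] ω :=
    condExp_stronglyMeasurable_mul_of_bound hm (continuous_exp.comp_stronglyMeasurable ha.neg)
      hW _ hbound
  have hmono : μ[W|m] ≤ᵐ[μ] μ[fun ω => 1 + V ω|m] :=
    condExp_mono hW ((integrable_const 1).add hV) hWV
  have hlin : μ[fun ω => 1 + V ω|m] =ᵐ[μ] fun ω => 1 + a ω := by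
    refine (condExp_add (integrable_const 1) hV m).trans ?_
    rw [condExp_const hm]
    filter_upwards [haV] with ω h
    simp [h]
  filter_upwards [hpull, hmono, hlin] with ω h1 h2 h3
  rw [h1, Pi.one_apply]
  calc exp (-a ω) * μ[W|m] ω ≤ exp (-a ω) * (1 + a ω) :=
        mul_le_mul_of_nonneg_left (h2.trans h3.le) (exp_pos _).le
    _ ≤ 1 := by
        rw [exp_neg, inv_mul_le_iff₀ (exp_pos _), mul_one, add_comm]
        exact add_one_le_exp _

end ConditionalStep

section TruncatedMean

variable {Ω : Type*} {m mΩ : MeasurableSpace Ω} {μ : Measure Ω} {Y g l a : Ω → ℝ}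

lemma measurable_truncate (hY : Measurable Y) (hg : Measurable g) (hl : Measurable l) :
    Measurable fun ω => truncate (g ω) (l ω) (Y ω) :=
  Measurable.ite ((measurableSet_le hg.neg hY).inter (measurableSet_lt hY hl)) hY measurable_const

lemma ae_abs_truncate_le_two (hg : ∀ᵐ ω ∂μ, 0 ≤ g ω ∧ g ω < 1)
    (hl : ∀ᵐ ω ∂μ, 0 < l ω ∧ l ω ≤ (logTailConst (g ω))⁻¹) :
    ∀ᵐ ω ∂μ, |truncate (g ω) (l ω) (Y ω)| ≤ 2 := by
  filter_upwards [hg, hl] with ω hg hl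
  exact abs_truncate_le (by linarith) (le_two_of_le_inv_logTailConst hg.1 hg.2 hl.2) zero_le_two

lemma integrable_truncate [IsFiniteMeasure μ] (hY : Measurable Y) (hgm : Measurable g)
    (hlm : Measurable l) (hg : ∀ᵐ ω ∂μ, 0 ≤ g ω ∧ g ω < 1)
    (hl : ∀ᵐ ω ∂μ, 0 < l ω ∧ l ω ≤ (logTailConst (g ω))⁻¹) :
    Integrable (fun ω => truncate (g ω) (l ω) (Y ω)) μ :=
  .of_bound (measurable_truncate hY hgm hlm).aestronglyMeasurable 2
    (ae_abs_truncate_le_two hg hl)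

lemma ae_sub_sub_inv_mul_sq_le_three (hg : ∀ᵐ ω ∂μ, 0 ≤ g ω ∧ g ω < 1)
    (hl : ∀ᵐ ω ∂μ, 0 < l ω ∧ l ω ≤ (logTailConst (g ω))⁻¹)
    (ha : a =ᵐ[μ] μ[fun ω => truncate (g ω) (l ω) (Y ω)|m]) :
    ∀ᵐ ω ∂μ, Y ω - a ω - (l ω)⁻¹ * Y ω ^ 2 ≤ 3 := by
  filter_upwards [hg, hl, ae_abs_le_of_ae_eq_condExp (ae_abs_truncate_le_two hg hl) ha]
    with ω hg hl ha
  have := sub_inv_mul_sq_le_quarter (y := Y ω) hl.1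
  have := le_two_of_le_inv_logTailConst hg.1 hg.2 hl.2
  linarith [neg_abs_le (a ω)]

lemma condExp_exp_sub_sub_inv_mul_sq_le_one [IsFiniteMeasure μ] (hm : m ≤ mΩ)
    (hY : Measurable Y) (hgm : Measurable g) (hlm : Measurable l)
    (hg : ∀ᵐ ω ∂μ, 0 ≤ g ω ∧ g ω < 1)
    (hl : ∀ᵐ ω ∂μ, 0 < l ω ∧ l ω ≤ (logTailConst (g ω))⁻¹)
    (ham : StronglyMeasurable[m] a) (ha : a =ᵐ[μ] μ[fun ω => truncate (g ω) (l ω) (Y ω)|m]) :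
    μ[fun ω => exp (Y ω - a ω - (l ω)⁻¹ * Y ω ^ 2) | m] ≤ᵐ[μ] 1 := by
  have hW : Integrable (fun ω => exp (Y ω - (l ω)⁻¹ * Y ω ^ 2)) μ := by
    refine .of_bound (by fun_prop) 3 ?_
    filter_upwards [ae_abs_truncate_le_two hg hl, hg, hl] with ω hT hg hl
    rw [norm_of_nonneg (exp_pos _).le]
    linarith [exp_sub_inv_mul_sq_le_one_add_truncate hg.1 hg.2 hl.1 hl.2 (y := Y ω),
      le_abs_self (truncate (g ω) (l ω) (Y ω))]
  have hsplit : (fun ω => exp (Y ω - a ω - (l ω)⁻¹ * Y ω ^ 2))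
      = fun ω => exp (-a ω) * exp (Y ω - (l ω)⁻¹ * Y ω ^ 2) := by
    ext ω
    rw [← exp_add]
    ring_nf
  rw [hsplit]
  refine condExp_exp_neg_mul_le_one hm (integrable_truncate hY hgm hlm hg hl)
    (ae_abs_truncate_le_two hg hl) hW ?_ ham ha
  filter_upwards [hg, hl] with ω hg hl
  exact exp_sub_inv_mul_sq_le_one_add_truncate hg.1 hg.2 hl.1 hl.2

end TruncatedMean

section ExpSum

variable {Ω : Type*} {mΩ : MeasurableSpace Ω} {μ : Measure Ω} {ℱ : Filtration ℕ mΩ}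

lemma supermartingale_exp_sum_s16 [IsFiniteMeasure μ] {Z : ℕ → Ω → ℝ} {c : ℝ}
    (hZm : ∀ n, StronglyMeasurable[ℱ (n + 1)] (Z n)) (hZc : ∀ n, ∀ᵐ ω ∂μ, Z n ω ≤ c)
    (hZexp : ∀ n, μ[fun ω => exp (Z n ω) | ℱ n] ≤ᵐ[μ] 1) :
    Supermartingale (fun n ω => exp (∑ i ∈ Finset.range n, Z i ω)) ℱ μ := by
  have hadapted : StronglyAdapted ℱ fun n ω => exp (∑ i ∈ Finset.range n, Z i ω) := fun n =>
    continuous_exp.comp_stronglyMeasurable <| Finset.stronglyMeasurable_fun_sum _ fun i hi =>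
      (hZm i).mono (ℱ.mono (Finset.mem_range.1 hi))
  have hbound (n : ℕ) : ∀ᵐ ω ∂μ, ‖exp (∑ i ∈ Finset.range n, Z i ω)‖ ≤ exp (n * c) := by
    filter_upwards [ae_all_iff.2 hZc] with ω hω
    rw [norm_of_nonneg (exp_pos _).le, exp_le_exp]
    simpa using Finset.sum_le_sum fun i (_ : i ∈ Finset.range n) => hω i
  have hint (n : ℕ) : Integrable (fun ω => exp (∑ i ∈ Finset.range n, Z i ω)) μ :=
    .of_bound ((hadapted n).mono (ℱ.le n)).aestronglyMeasurable _ (hbound n)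
  refine supermartingale_nat hadapted hint fun n => ?_
  have hZint : Integrable (fun ω => exp (Z n ω)) μ :=
    .of_bound (continuous_exp.comp_stronglyMeasurable ((hZm n).mono (ℱ.le _))).aestronglyMeasurable
      (exp c) (by filter_upwards [hZc n] with ω h; simpa [norm_of_nonneg (exp_pos _).le] using h)
  have hsucc : (fun ω => exp (∑ i ∈ Finset.range (n + 1), Z i ω))
      = (fun ω => exp (∑ i ∈ Finset.range n, Z i ω)) * fun ω => exp (Z n ω) := by
    ext ω
    simp [Finset.sum_range_succ, exp_add]
  rw [hsucc]
  filter_upwards [condExp_stronglyMeasurable_mul_of_bound (ℱ.le n) (hadapted n) hZint _ (hbound n),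
    hZexp n] with ω h1 h2
  rw [h1, Pi.mul_apply]
  exact mul_le_of_le_one_right (exp_pos _).le h2

lemma Supermartingale.integral_le_integral_zero [SigmaFiniteFiltration μ ℱ] {f : ℕ → Ω → ℝ}
    (hf : Supermartingale f ℱ μ) (n : ℕ) : ∫ ω, f n ω ∂μ ≤ ∫ ω, f 0 ω ∂μ := by
  simpa using hf.setIntegral_le (Nat.zero_le n) MeasurableSet.univ

end ExpSum

/-- Corollary 5.3. -/
theorem stmt_16 {Ω : Type*} {mΩ : MeasurableSpace Ω} {μ : Measure Ω}
    [IsProbabilityMeasure μ] (ℱ : Filtration ℕ mΩ)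
    (Y γ lam : ℕ → Ω → ℝ)
    (hY : ∀ n, StronglyMeasurable[ℱ (n + 1)] (Y (n + 1)))
    (hγmeas : ∀ n, StronglyMeasurable[ℱ n] (γ (n + 1)))
    (hlammeas : ∀ n, StronglyMeasurable[ℱ n] (lam (n + 1)))
    (hγ : ∀ n, ∀ᵐ ω ∂μ, 0 ≤ γ (n + 1) ω ∧ γ (n + 1) ω < 1)
    (hlam : ∀ n, ∀ᵐ ω ∂μ, 0 < lam (n + 1) ω ∧
      lam (n + 1) ω ≤ (∑' j : ℕ, (γ (n + 1) ω) ^ j / ((j : ℝ) + 2))⁻¹)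
    (μ' : ℕ → Ω → ℝ)
    (hμ'meas : ∀ n, StronglyMeasurable[ℱ n] (μ' (n + 1)))
    (hμ' : ∀ n, μ' (n + 1) =ᵐ[μ]
      μ[fun ω => if -γ (n + 1) ω ≤ Y (n + 1) ω ∧ Y (n + 1) ω < lam (n + 1) ω
          then Y (n + 1) ω else 0 | ℱ n]) :
    Supermartingale
      (fun n ω => Real.exp (∑ i ∈ Finset.range n,
        (Y (i + 1) ω - μ' (i + 1) ω - (lam (i + 1) ω)⁻¹ * (Y (i + 1) ω) ^ 2))) ℱ μ ∧
    ∀ n, ∫ ω, Real.exp (∑ i ∈ Finset.range n,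
        (Y (i + 1) ω - μ' (i + 1) ω - (lam (i + 1) ω)⁻¹ * (Y (i + 1) ω) ^ 2)) ∂μ ≤ 1 := by
  have hYm (n : ℕ) : Measurable (Y (n + 1)) := ((hY n).mono (ℱ.le _)).measurable
  have hγm (n : ℕ) : Measurable (γ (n + 1)) := ((hγmeas n).mono (ℱ.le _)).measurable
  have hlamm (n : ℕ) : Measurable (lam (n + 1)) := ((hlammeas n).mono (ℱ.le _)).measurable
  have hZm (n : ℕ) : StronglyMeasurable[ℱ (n + 1)] fun ω =>
      Y (n + 1) ω - μ' (n + 1) ω - (lam (n + 1) ω)⁻¹ * Y (n + 1) ω ^ 2 := by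
    have hle := ℱ.mono n.le_succ
    exact ((hY n).sub ((hμ'meas n).mono hle)).sub
      (((hlammeas n).mono hle).measurable.inv.stronglyMeasurable.mul ((hY n).pow 2))
  have hsm := supermartingale_exp_sum_s16 hZm
    (fun n => ae_sub_sub_inv_mul_sq_le_three (hγ n) (hlam n) (hμ' n))
    (fun n => condExp_exp_sub_sub_inv_mul_sq_le_one (ℱ.le n) (hYm n) (hγm n) (hlamm n)
      (hγ n) (hlam n) (hμ'meas n) (hμ' n))
  refine ⟨hsm, fun n => ?_⟩
  simpa using Supermartingale.integral_le_integral_zero hsm n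
end
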